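/- arXiv:1304.7571 — 7 statements merged into one kernel-verified Lean document; each statement's English description precedes it below -/
import Mathlib

section
/- Let T = (R, F) be a tree with nonnegative edge costs c, and let (R, 𝓔) be a connected hypergraph on the same vertex set R. For each hyperedge A ∈ 𝓔, let F(A) ⊆ F be a maximum-cost set of edges of T such that contracting A to a single vertex in T \ F(A) yields a tree. Then ∑_{A ∈ 𝓔} c(F(A)) ≥ c(F). -/
/-!
Call `U ⊆ E(T)` an `A`-rooted forest when every component of `(V, U)` contains exactly one vertex
of `A`. Then `E(T) \ U` is overlapped by `A`: the contracted graph is connected and, as each edge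
of `U` is the first edge on the path from some `v ∉ A` to its root, it has at most `|V \ A|`
edges.

If `U` is rooted at `A ∪ B` and `r ∈ A ∩ B`, joining every component whose root lies in `B \ A`
(resp. `A \ B`) to the rest through the first edge on its way to `r` yields forests rooted at `A`
and at `B` whose common edges all lie in `U`. Since the hypergraph is connected, `V` is reached by
adding hyperedges one at a time, each meeting the union of the previous ones. Splitting the empty
forest, which is rooted at `V`, along this sequence covers `E(T)` by sets `E(T) \ U_A` overlapped
by the hyperedges `A`, whence `c(E(T)) ≤ ∑ c(E(T) \ U_A) ≤ ∑ c(F(A))`.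
-/

open SimpleGraph

variable {V : Type*}

/-- The setoid identifying all points of `A` with each other. -/
def contractSetoid (A : Set V) : Setoid V where
  r x y := x = y ∨ (x ∈ A ∧ y ∈ A)
  iseqv := by
    constructor
    · intro x; exact Or.inl rfl
    · rintro x y (rfl | ⟨hx, hy⟩)
      · exact Or.inl rfl
      · exact Or.inr ⟨hy, hx⟩
    · rintro x y z (rfl | ⟨hx, hy⟩) (rfl | ⟨hy', hz⟩)
      · exact Or.inl rfl
      · exact Or.inr ⟨hy', hz⟩
      · exact Or.inr ⟨hx, hy⟩
      · exact Or.inr ⟨hx, hz⟩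

/-- The graph obtained from `G` by shrinking the set `A` into a single node. -/
def contract (G : SimpleGraph V) (A : Set V) :
    SimpleGraph (Quotient (contractSetoid A)) where
  Adj q q' := q ≠ q' ∧ ∃ x y : V, Quotient.mk (contractSetoid A) x = q ∧
    Quotient.mk (contractSetoid A) y = q' ∧ G.Adj x y
  symm := ⟨by
    rintro q q' ⟨hne, x, y, hx, hy, hadj⟩
    exact ⟨hne.symm, y, x, hy, hx, hadj.symm⟩⟩
  loopless := ⟨by intro q h; exact h.1 rfl⟩

/-- `A` overlaps the edge set `F'` in `T`: the graph obtained from `T \ F'` by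
shrinking `A` into a single node is a tree. -/
def Overlaps (T : SimpleGraph V) (A : Set V) (F' : Finset (Sym2 V)) : Prop :=
  (contract (T.deleteEdges ↑F') A).IsTree

open Finset

namespace SimpleGraph

variable {G : SimpleGraph V}

lemma Reachable.exists_adj_dist_lt {u r : V} (h : G.Reachable u r) (hne : u ≠ r) :
    ∃ y, G.Adj u y ∧ G.dist y r < G.dist u r := by
  obtain ⟨p, hp⟩ := h.exists_walk_length_eq_dist
  have hnil : ¬p.Nil := Walk.not_nil_of_ne hne
  refine ⟨p.snd, p.adj_snd hnil, ?_⟩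
  have := dist_le p.tail
  have := p.length_tail_add_one hnil
  omega

lemma Reachable.eq_of_forall_adj {α : Type*} {f : V → α} (hf : ∀ v w, G.Adj v w → f v = f w)
    {v w : V} (h : G.Reachable v w) : f v = f w := by
  obtain ⟨p⟩ := h
  induction p with
  | nil => rfl
  | cons hadj _ ih => exact (hf _ _ hadj).trans ih

lemma reachable_iterate {f : V → V} (hf : ∀ v, G.Reachable v (f v)) (n : ℕ) (v : V) :
    G.Reachable v (f^[n] v) := by
  induction n generalizing v with
  | zero => rfl
  | succ n ih => exact (hf v).trans (ih (f v))

lemma IsAcyclic.snd_eq_or_snd_eq_of_adj (hG : G.IsAcyclic) {x y a : V} {p : G.Walk x a}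
    {q : G.Walk y a} (hp : p.IsPath) (hq : q.IsPath) (hxy : G.Adj x y) :
    p.snd = y ∨ q.snd = x := by
  by_cases hy : y ∈ p.support
  · exact Or.inl (hG.eq_snd_of_adj_start hp hxy hy).symm
  · right
    have := (hG.subsingleton_path y a).elim ⟨q, hq⟩ ⟨_, hp.cons hy (h := hxy.symm)⟩
    simpa using congrArg (fun p : G.Path y a => p.1.snd) this

lemma isTree_of_connected_of_natCard_edgeSet_add_one_le [Finite V] (hG : G.Connected)
    (h : Nat.card G.edgeSet + 1 ≤ Nat.card V) : G.IsTree :=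
  isTree_iff_connected_and_card.2 ⟨hG, le_antisymm h hG.card_vert_le_card_edgeSet_add_one⟩

lemma deleteEdges_edgeFinset_sdiff [Fintype G.edgeSet] [DecidableEq V] {U : Finset (Sym2 V)}
    (hU : ↑U ⊆ G.edgeSet) : G.deleteEdges ↑(G.edgeFinset \ U) = fromEdgeSet ↑U := by
  ext x y
  have := @hU s(x, y)
  simp only [deleteEdges_adj, coe_sdiff, Set.mem_sdiff, coe_edgeFinset, mem_edgeSet, mem_coe,
    fromEdgeSet_adj] at this ⊢
  constructor
  · rintro ⟨hxy, h⟩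
    exact ⟨by tauto, hxy.ne⟩
  · rintro ⟨hU, -⟩
    exact ⟨this hU, fun h => h.2 hU⟩

lemma Reachable.contract_mk (A : Set V) {u v : V} (h : G.Reachable u v) :
    (contract G A).Reachable (Quotient.mk _ u) (Quotient.mk _ v) := by
  obtain ⟨p⟩ := h
  induction p with
  | nil => rfl
  | @cons u w _ hadj _ ih =>
    refine Reachable.trans ?_ ih
    by_cases heq : Quotient.mk (contractSetoid A) u = Quotient.mk _ w
    · rw [heq]
    · exact Adj.reachable ⟨heq, u, w, rfl, rfl, hadj⟩

lemma natCard_edgeSet_contract_le [Finite V] (G : SimpleGraph V) (A : Set V) :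
    Nat.card (contract G A).edgeSet ≤ Nat.card G.edgeSet := by
  have hsub : (contract G A).edgeSet ⊆ Sym2.map (Quotient.mk _) '' G.edgeSet := by
    intro e he
    induction e using Sym2.ind with | _ q q' =>
    obtain ⟨-, x, y, rfl, rfl, hxy⟩ := he
    exact ⟨s(x, y), hxy, rfl⟩
  simp only [Nat.card_coe_set_eq]
  exact (Set.ncard_le_ncard hsub (Set.toFinite _)).trans (Set.ncard_image_le (Set.toFinite _))

end SimpleGraph

lemma card_compl_add_one_le_natCard_quotient [Fintype V] [DecidableEq V] {A : Finset V}
    (hA : A.Nonempty) : Aᶜ.card + 1 ≤ Nat.card (Quotient (contractSetoid (A : Set V))) := by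
  obtain ⟨a₀, ha₀⟩ := hA
  let f : Option (Aᶜ : Finset V) → Quotient (contractSetoid (A : Set V)) :=
    fun o => Quotient.mk _ (o.elim a₀ (↑))
  have hf : Function.Injective f := by
    have hmk : ∀ {u v : V}, Quotient.mk (contractSetoid (A : Set V)) u = Quotient.mk _ v →
        u = v ∨ (u ∈ A ∧ v ∈ A) := fun h => Quotient.exact h
    rintro (_ | ⟨u, hu⟩) (_ | ⟨v, hv⟩) h
    · rfl
    · rcases hmk h with rfl | h
      exacts [absurd ha₀ (mem_compl.1 hv), absurd h.2 (mem_compl.1 hv)]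
    · rcases hmk h with h | h
      · obtain rfl : u = a₀ := h
        exact absurd ha₀ (mem_compl.1 hu)
      · exact absurd h.1 (mem_compl.1 hu)
    · rcases hmk h with rfl | h
      exacts [rfl, absurd h.1 (mem_compl.1 hu)]
  have := Nat.card_le_card_of_injective f hf
  rwa [Nat.card_eq_fintype_card, Fintype.card_option, Fintype.card_coe] at this

lemma Function.iterate_mem_of_lt {α : Type*} {f : α → α} {s : Set α} (φ : α → ℕ)
    (hfix : ∀ a ∈ s, f a = a) (hlt : ∀ v, f v ∉ s → φ (f v) < φ v) :
    ∀ {n : ℕ} {v : α}, φ v < n → f^[n] v ∈ s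
  | 0, _, h => absurd h (Nat.not_lt_zero _)
  | n + 1, v, h => by
    rw [Function.iterate_succ_apply]
    by_cases hv : f v ∈ s
    · rwa [Function.iterate_fixed (hfix _ hv)]
    · exact Function.iterate_mem_of_lt φ hfix hlt (by have := hlt v hv; omega)

def primalGraph (𝓔 : Finset (Finset V)) : SimpleGraph V :=
  SimpleGraph.fromRel fun x y => ∃ A ∈ 𝓔, x ∈ A ∧ y ∈ A

namespace primalGraph

variable {𝓔 : Finset (Finset V)}

lemma exists_mem_of_adj {u v : V} (h : (primalGraph 𝓔).Adj u v) : ∃ A ∈ 𝓔, u ∈ A ∧ v ∈ A := by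
  obtain ⟨-, ⟨A, hA, hu, hv⟩ | ⟨A, hA, hv, hu⟩⟩ := h
  exacts [⟨A, hA, hu, hv⟩, ⟨A, hA, hu, hv⟩]

lemma exists_mem_nonempty [Nontrivial V] (hconn : (primalGraph 𝓔).Connected) :
    ∃ A ∈ 𝓔, A.Nonempty := by
  obtain ⟨u, v, huv⟩ := exists_pair_ne V
  obtain ⟨p⟩ := hconn.preconnected u v
  obtain ⟨A, hA, hu, -⟩ := exists_mem_of_adj (p.adj_snd (Walk.not_nil_of_ne huv))
  exact ⟨A, hA, u, hu⟩

lemma exists_mem_not_subset (hconn : (primalGraph 𝓔).Connected) {W : Finset V} {w v : V}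
    (hw : w ∈ W) (hv : v ∉ W) : ∃ A ∈ 𝓔, ∃ r ∈ A, r ∈ W ∧ ¬A ⊆ W := by
  obtain ⟨p⟩ := hconn.preconnected w v
  obtain ⟨d, -, hd₁, hd₂⟩ := p.exists_boundary_dart (W : Set V) hw hv
  obtain ⟨A, hA, h₁, h₂⟩ := exists_mem_of_adj d.adj
  exact ⟨A, hA, d.fst, h₁, hd₁, fun h => hd₂ (h h₂)⟩

end primalGraph

namespace SimpleGraph

def IsRootedForest (T : SimpleGraph V) (A : Finset V) (U : Finset (Sym2 V)) : Prop :=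
  ↑U ⊆ T.edgeSet ∧ ∀ v, ∃! a, a ∈ A ∧ (fromEdgeSet (U : Set (Sym2 V))).Reachable v a

lemma isRootedForest_of_retraction {T : SimpleGraph V} {A : Finset V} {U : Finset (Sym2 V)}
    (hU : ↑U ⊆ T.edgeSet) (Ψ : V → V) (hmem : ∀ v, Ψ v ∈ A) (hfix : ∀ a ∈ A, Ψ a = a)
    (hadj : ∀ v w, (fromEdgeSet (U : Set (Sym2 V))).Adj v w → Ψ v = Ψ w)
    (hreach : ∀ v, (fromEdgeSet (U : Set (Sym2 V))).Reachable v (Ψ v)) :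
    IsRootedForest T A U := by
  refine ⟨hU, fun v => ⟨Ψ v, ⟨hmem v, hreach v⟩, fun a ⟨ha, hva⟩ => ?_⟩⟩
  rw [hva.eq_of_forall_adj hadj, hfix a ha]

lemma isRootedForest_univ_empty [Fintype V] {T : SimpleGraph V} : IsRootedForest T univ ∅ :=
  isRootedForest_of_retraction (by simp) id mem_univ (fun _ _ => rfl) (by simp) fun _ => .rfl

namespace IsRootedForest

variable {T : SimpleGraph V} {A : Finset V} {U : Finset (Sym2 V)}

noncomputable def root (hU : IsRootedForest T A U) (v : V) : V :=
  (hU.2 v).exists.choose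

lemma root_mem (hU : IsRootedForest T A U) (v : V) : hU.root v ∈ A :=
  (hU.2 v).exists.choose_spec.1

lemma reachable_root (hU : IsRootedForest T A U) (v : V) :
    (fromEdgeSet (U : Set (Sym2 V))).Reachable v (hU.root v) :=
  (hU.2 v).exists.choose_spec.2

lemma eq_root (hU : IsRootedForest T A U) {v a : V} (ha : a ∈ A)
    (h : (fromEdgeSet (U : Set (Sym2 V))).Reachable v a) : a = hU.root v :=
  (hU.2 v).unique ⟨ha, h⟩ ⟨hU.root_mem v, hU.reachable_root v⟩

lemma root_eq_self (hU : IsRootedForest T A U) {a : V} (ha : a ∈ A) : hU.root a = a :=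
  (hU.eq_root ha .rfl).symm

lemma root_eq_root (hU : IsRootedForest T A U) {v w : V}
    (h : (fromEdgeSet (U : Set (Sym2 V))).Reachable v w) : hU.root v = hU.root w :=
  (hU.eq_root (hU.root_mem w) (h.trans (hU.reachable_root w))).symm

lemma fromEdgeSet_le (hU : IsRootedForest T A U) : fromEdgeSet (U : Set (Sym2 V)) ≤ T :=
  fun _ _ h => hU.1 h.1

lemma card_le_card_compl [Fintype V] [DecidableEq V] (hU : IsRootedForest T A U)
    (hT : T.IsAcyclic) : U.card ≤ Aᶜ.card := by
  set H := fromEdgeSet (U : Set (Sym2 V))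
  have hH : H.IsAcyclic := hT.anti hU.fromEdgeSet_le
  choose π hπ using fun v => (hU.reachable_root v).exists_walk_length_eq_dist
  have hπ_path v : (π v).IsPath := (π v).isPath_of_length_eq_dist (hπ v)
  have hπ_snd {a} (ha : a ∈ A) : (π a).snd = a := by
    rw [Walk.snd, Walk.getVert_of_length_le _ (by simp [hπ, hU.root_eq_self ha]),
      hU.root_eq_self ha]
  -- every edge of `U` joins some `v ∉ A` to the next vertex on its path to the root
  refine (card_le_card fun e he => ?_).trans (card_image_le (f := fun v => s(v, (π v).snd)))
  induction e using Sym2.ind with | _ x y =>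
  have hxy : H.Adj x y := ⟨he, (hU.1 he).ne⟩
  have hroot := hU.root_eq_root hxy.reachable
  have hπy : ((π y).copy rfl hroot.symm).IsPath := by simpa using hπ_path y
  rw [mem_image]
  rcases hH.snd_eq_or_snd_eq_of_adj (hπ_path x) hπy hxy with h | h
  · refine ⟨x, mem_compl.2 fun hx => hxy.ne ?_, by rw [h]⟩
    rw [← h, hπ_snd hx]
  · simp only [Walk.getVert_copy] at h
    change (π y).snd = x at h
    refine ⟨y, mem_compl.2 fun hy => hxy.ne ?_, by rw [h, Sym2.eq_swap]⟩
    rw [← h, hπ_snd hy]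

theorem overlaps [Fintype V] [DecidableEq V] [Fintype T.edgeSet] (hU : IsRootedForest T A U)
    (hT : T.IsTree) : Overlaps T ↑A (T.edgeFinset \ U) := by
  have : Nonempty V := hT.connected.nonempty
  have hA : A.Nonempty := ⟨_, hU.root_mem (Classical.arbitrary V)⟩
  have : Nonempty (Quotient (contractSetoid (A : Set V))) := ⟨Quotient.mk _ hA.choose⟩
  rw [Overlaps, deleteEdges_edgeFinset_sdiff hU.1]
  refine isTree_of_connected_of_natCard_edgeSet_add_one_le ⟨fun q q' => ?_⟩ ?_
  · induction q using Quotient.ind with | _ x =>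
    induction q' using Quotient.ind with | _ y =>
    have hxy : Quotient.mk (contractSetoid (A : Set V)) (hU.root x) = Quotient.mk _ (hU.root y) :=
      Quotient.sound (Or.inr ⟨hU.root_mem x, hU.root_mem y⟩)
    exact ((hU.reachable_root x).contract_mk _).trans
      (hxy ▸ ((hU.reachable_root y).contract_mk _).symm)
  · calc _ ≤ Nat.card (fromEdgeSet (U : Set (Sym2 V))).edgeSet + 1 := by
          gcongr; exact natCard_edgeSet_contract_le _ _
      _ ≤ U.card + 1 := by
          gcongr
          rw [Nat.card_coe_set_eq, ← Set.ncard_coe_finset]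
          exact Set.ncard_le_ncard (by simp [edgeSet_fromEdgeSet]) (Set.toFinite _)
      _ ≤ Aᶜ.card + 1 := by gcongr; exact hU.card_le_card_compl hT.isAcyclic
      _ ≤ _ := card_compl_add_one_le_natCard_quotient hA

theorem restrict [Fintype V] [DecidableEq V] {W A : Finset V} (hU : IsRootedForest T W U)
    (hAW : A ⊆ W) (x y : V → V) (φ : V → ℕ)
    (hφ : ∀ v w, (fromEdgeSet (U : Set (Sym2 V))).Reachable v w → φ v = φ w)
    (hx : ∀ b ∈ W \ A, (fromEdgeSet (U : Set (Sym2 V))).Reachable b (x b))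
    (hxy : ∀ b ∈ W \ A, T.Adj (x b) (y b)) (hy : ∀ b ∈ W \ A, φ (y b) < φ b) :
    IsRootedForest T A (U ∪ (W \ A).image fun b => s(x b, y b)) := by
  set U' := U ∪ (W \ A).image fun b => s(x b, y b)
  set H' := fromEdgeSet (U' : Set (Sym2 V))
  have hU'T : ↑U' ⊆ T.edgeSet := by
    simp only [U', coe_union, coe_image, Set.union_subset_iff, Set.image_subset_iff]
    exact ⟨hU.1, fun b hb => hxy b hb⟩
  have hmono {v w} (h : (fromEdgeSet (U : Set (Sym2 V))).Reachable v w) : H'.Reachable v w :=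
    h.mono (fromEdgeSet_mono (by simp [U']))
  -- `σ` sends a vertex to its `W`-root and, when that root is not in `A`, across the root's new
  -- edge; iterated long enough, it sends every vertex to its `A`-root
  let σ v := if hU.root v ∈ A then hU.root v else y (hU.root v)
  have hσ_fix : ∀ a ∈ A, σ a = a := fun a ha => by simp [σ, hU.root_eq_self (hAW ha), ha]
  have hσ_cut {b} (hb : b ∈ W \ A) : σ (x b) = y b := by
    have hb' := mem_sdiff.1 hb
    simp [σ, ← hU.root_eq_root (hx b hb), hU.root_eq_self hb'.1, hb'.2]
  have hσ_reach v : H'.Reachable v (σ v) := by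
    by_cases hv : hU.root v ∈ A
    · simpa [σ, hv] using hmono (hU.reachable_root v)
    · have hb : hU.root v ∈ W \ A := mem_sdiff.2 ⟨hU.root_mem v, hv⟩
      simp only [σ, if_neg hv]
      exact (hmono ((hU.reachable_root v).trans (hx _ hb))).trans
        (Adj.reachable ⟨mem_union_right _ (mem_image_of_mem _ hb), (hxy _ hb).ne⟩)
  have hσ_lt v (hv : σ v ∉ A) : φ (σ v) < φ v := by
    by_cases hr : hU.root v ∈ A
    · simp [σ, hr] at hv
    · simp only [σ, if_neg hr]
      rw [hφ _ _ (hU.reachable_root v)]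
      exact hy _ (mem_sdiff.2 ⟨hU.root_mem v, hr⟩)
  obtain ⟨M, hM⟩ : ∃ M, ∀ v, φ v < M :=
    ⟨univ.sup φ + 1, fun v => Nat.lt_succ_of_le (le_sup (mem_univ v))⟩
  have hσM_mem v : σ^[M] v ∈ A := Function.iterate_mem_of_lt φ hσ_fix hσ_lt (hM v)
  have hσM_σ v : σ^[M] (σ v) = σ^[M] v := by
    rw [← Function.iterate_succ_apply, Function.iterate_succ_apply', hσ_fix _ (hσM_mem v)]
  refine isRootedForest_of_retraction hU'T (σ^[M]) hσM_mem
    (fun a ha => Function.iterate_fixed (hσ_fix a ha) M) (fun v w h => ?_)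
    (reachable_iterate hσ_reach M)
  rcases mem_union.1 h.1 with hvw | hvw
  · rw [← hσM_σ v, ← hσM_σ w]
    simp only [σ, hU.root_eq_root (Adj.reachable (G := fromEdgeSet _) ⟨hvw, h.2⟩)]
  · obtain ⟨b, hb, hvw⟩ := mem_image.1 hvw
    rcases Sym2.eq_iff.1 hvw with ⟨rfl, rfl⟩ | ⟨rfl, rfl⟩
    · rw [← hσM_σ (x b), hσ_cut hb]
    · rw [← hσM_σ (x b), hσ_cut hb]

theorem exists_split [Fintype V] [DecidableEq V] {A B : Finset V}
    (hU : IsRootedForest T (A ∪ B) U) (hT : T.Connected) {r : V} (hrA : r ∈ A) (hrB : r ∈ B) :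
    ∃ UA UB, IsRootedForest T A UA ∧ IsRootedForest T B UB ∧ UA ∩ UB ⊆ U := by
  set H := fromEdgeSet (U : Set (Sym2 V))
  -- a component avoiding `r` is attached through a vertex `x` of it closest to `r` and a
  -- neighbour `y` of `x` closer still; the distance `φ` of a component from `r` drops each time
  let φ v := sInf ((T.dist · r) '' {u | H.Reachable v u})
  have hφ v w (h : H.Reachable v w) : φ v = φ w := by
    simp only [φ]
    congr 2
    ext u
    exact ⟨h.symm.trans, h.trans⟩
  have hφ_le v u (h : H.Reachable v u) : φ v ≤ T.dist u r := Nat.sInf_le ⟨u, h, rfl⟩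
  have hcut v : ∃ x y, ¬H.Reachable v r →
      H.Reachable v x ∧ T.Adj x y ∧ T.dist x r = φ v ∧ T.dist y r < φ v := by
    by_cases hv : H.Reachable v r
    · exact ⟨v, v, fun h => absurd hv h⟩
    have hmin : φ v ∈ (T.dist · r) '' {u | H.Reachable v u} :=
      Nat.sInf_mem ⟨_, v, Reachable.refl v, rfl⟩
    obtain ⟨x, hvx, hx⟩ := hmin
    obtain ⟨y, hxy, hy⟩ := (hT x r).exists_adj_dist_lt fun h => hv (h ▸ hvx)
    exact ⟨x, y, fun _ => ⟨hvx, hxy, hx, hx ▸ hy⟩⟩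
  choose x y hcut using hcut
  have hsep {C} (hrC : r ∈ C) {b} (hb : b ∈ (A ∪ B) \ C) : ¬H.Reachable b r := fun h => by
    obtain ⟨hb, hbC⟩ := mem_sdiff.1 hb
    rw [← hU.root_eq_self hb, hU.root_eq_root h, hU.root_eq_self (mem_union_left _ hrA)] at hbC
    exact hbC hrC
  have hroot {C} (hrC : r ∈ C) {b} (hb : b ∈ (A ∪ B) \ C) : hU.root (x b) = b := by
    rw [← hU.root_eq_root (hcut b (hsep hrC hb)).1, hU.root_eq_self (mem_sdiff.1 hb).1]
  have restrict {C} (hC : C ⊆ A ∪ B) (hrC : r ∈ C) :=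
    hU.restrict hC x y φ hφ (fun b hb => (hcut b (hsep hrC hb)).1)
      (fun b hb => (hcut b (hsep hrC hb)).2.1)
      (fun b hb => (hφ_le _ _ .rfl).trans_lt (hcut b (hsep hrC hb)).2.2.2)
  refine ⟨_, _, restrict subset_union_left hrA, restrict subset_union_right hrB, fun e he => ?_⟩
  rw [mem_inter, mem_union, mem_union, mem_image, mem_image] at he
  obtain ⟨he | ⟨b, hb, rfl⟩, he | ⟨a, ha, hab⟩⟩ := he
  any_goals assumption
  exfalso
  rcases Sym2.eq_iff.1 hab with ⟨h, -⟩ | ⟨h₁, h₂⟩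
  · have hab := (hroot hrB ha).symm.trans (h ▸ hroot hrA hb)
    obtain ⟨ha, haB⟩ := mem_sdiff.1 ha
    exact (mem_sdiff.1 hb).2 (hab ▸ (mem_union.1 ha).resolve_right haB)
  · have := (hcut a (hsep hrB ha)).2.2
    have := (hcut b (hsep hrA hb)).2.2
    rw [h₁, h₂] at *
    omega

lemma sum_sdiff_le_of_union [Fintype V] [DecidableEq V] [Fintype T.edgeSet]
    (hT : T.Connected) {c : Sym2 V → ℝ} (hc : ∀ e, 0 ≤ c e) {A W : Finset V} {r : V}
    (hrA : r ∈ A) (hrW : r ∈ W) {α β : ℝ}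
    (hA : ∀ U, IsRootedForest T A U → ∑ e ∈ T.edgeFinset \ U, c e ≤ α)
    (hW : ∀ U, IsRootedForest T W U → ∑ e ∈ T.edgeFinset \ U, c e ≤ β)
    {U : Finset (Sym2 V)} (hU : IsRootedForest T (A ∪ W) U) :
    ∑ e ∈ T.edgeFinset \ U, c e ≤ α + β := by
  obtain ⟨UA, UW, hUA, hUW, hsub⟩ := hU.exists_split hT hrA hrW
  have hcover : T.edgeFinset \ U ⊆ (T.edgeFinset \ UA) ∪ (T.edgeFinset \ UW) := by
    rw [← sdiff_inter_distrib_right]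
    exact sdiff_subset_sdiff subset_rfl hsub
  calc ∑ e ∈ T.edgeFinset \ U, c e
      ≤ ∑ e ∈ (T.edgeFinset \ UA) ∪ (T.edgeFinset \ UW), c e :=
        sum_le_sum_of_subset_of_nonneg hcover fun e _ _ => hc e
    _ ≤ ∑ e ∈ T.edgeFinset \ UA, c e + ∑ e ∈ T.edgeFinset \ UW, c e := by
        rw [← sum_union_inter]
        exact le_add_of_nonneg_right (sum_nonneg fun e _ => hc e)
    _ ≤ α + β := add_le_add (hA _ hUA) (hW _ hUW)

end IsRootedForest

theorem sum_edgeFinset_le_of_forall_isRootedForest [Fintype V] [DecidableEq V]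
    [Fintype T.edgeSet] (hT : T.Connected) {𝓔 : Finset (Finset V)}
    (hconn : (primalGraph 𝓔).Connected) {c : Sym2 V → ℝ} (hc : ∀ e, 0 ≤ c e)
    {g : Finset V → ℝ} (hg : ∀ A ∈ 𝓔, 0 ≤ g A)
    (hbound : ∀ A ∈ 𝓔, ∀ U, IsRootedForest T A U → ∑ e ∈ T.edgeFinset \ U, c e ≤ g A) :
    ∑ e ∈ T.edgeFinset, c e ≤ ∑ A ∈ 𝓔, g A := by
  obtain hV | hV := subsingleton_or_nontrivial V
  · have : T.edgeFinset = ∅ := by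
      ext e
      induction e using Sym2.ind with | _ u v =>
      simp only [mem_edgeFinset, mem_edgeSet, notMem_empty, iff_false]
      exact fun h => h.ne (Subsingleton.elim u v)
    rw [this, sum_empty]
    exact sum_nonneg hg
  obtain ⟨A₀, hA₀, hA₀ne⟩ := primalGraph.exists_mem_nonempty hconn
  -- grow the covered vertex set `W` one crossing hyperedge at a time
  suffices key : ∀ n (W : Finset V), Wᶜ.card = n → W.Nonempty → ∀ S ⊆ 𝓔, (∀ B ∈ S, B ⊆ W) →
      (∀ U, IsRootedForest T W U → ∑ e ∈ T.edgeFinset \ U, c e ≤ ∑ B ∈ S, g B) →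
      ∑ e ∈ T.edgeFinset, c e ≤ ∑ A ∈ 𝓔, g A from
    key _ A₀ rfl hA₀ne {A₀} (singleton_subset_iff.2 hA₀) (by simp) (by simpa using hbound A₀ hA₀)
  intro n
  induction n using Nat.strong_induction_on with | _ n ih =>
  intro W hn hW S hS hSW hWS
  by_cases huniv : W = univ
  · subst huniv
    simpa using (hWS ∅ isRootedForest_univ_empty).trans
      (sum_le_sum_of_subset_of_nonneg hS fun A hA _ => hg A hA)
  obtain ⟨v, hv⟩ : ∃ v, v ∉ W := by simpa [eq_univ_iff_forall] using huniv
  obtain ⟨A, hA, r, hrA, hrW, hAW⟩ := primalGraph.exists_mem_not_subset hconn hW.choose_spec hv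
  have hAS : A ∉ S := fun h => hAW (hSW A h)
  refine ih _ ?_ (A ∪ W) rfl (hW.mono subset_union_right) (insert A S) (insert_subset hA hS)
    ?_ fun U hU => ?_
  · obtain ⟨x, hxA, hxW⟩ := not_subset.1 hAW
    rw [← hn]
    exact card_lt_card (compl_ssubset_compl.2
      ((ssubset_iff_of_subset subset_union_right).2 ⟨x, mem_union_left _ hxA, hxW⟩))
  · intro B hB
    rcases mem_insert.1 hB with rfl | hB
    exacts [subset_union_left, (hSW B hB).trans subset_union_right]
  · rw [sum_insert hAS]
    exact hU.sum_sdiff_le_of_union hT hc hrA hrW (hbound A hA) hWS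

end SimpleGraph

/-- Let `T` be a tree on `R` with nonnegative edge costs `c` and let
`(R, 𝓔)` be a connected hypergraph. For every hyperedge `A ∈ 𝓔` let `FA A` be a
maximum-cost edge set of `T` overlapped by `A`. Then `∑_{A ∈ 𝓔} c(FA A) ≥ c(F)`. -/
theorem stmt_0 [Fintype V] (T : SimpleGraph V) (hT : T.IsTree)
    (c : Sym2 V → ℝ) (hc : ∀ e, 0 ≤ c e)
    (𝓔 : Finset (Finset V))
    (hconn : (SimpleGraph.fromRel (fun x y => ∃ A ∈ 𝓔, x ∈ A ∧ y ∈ A)).Connected)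
    (FA : Finset V → Finset (Sym2 V))
    (hFA : ∀ A ∈ 𝓔, ↑(FA A) ⊆ T.edgeSet ∧ Overlaps T ↑A (FA A) ∧
      ∀ F' : Finset (Sym2 V), ↑F' ⊆ T.edgeSet → Overlaps T ↑A F' →
        ∑ e ∈ F', c e ≤ ∑ e ∈ FA A, c e) :
    ∑ᶠ e ∈ T.edgeSet, c e ≤ ∑ A ∈ 𝓔, ∑ e ∈ FA A, c e := by
  classical
  rw [← coe_edgeFinset, finsum_mem_coe_finset]
  refine sum_edgeFinset_le_of_forall_isRootedForest hT.connected hconn hc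
    (fun A _ => sum_nonneg fun e _ => hc e) fun A hA U hU => ?_
  refine (hFA A hA).2.2 _ (fun e he => ?_) (hU.overlaps hT)
  exact mem_edgeFinset.1 (mem_sdiff.1 he).1
end

section
/- Let τ > 0 and let f_0, …, f_q and s_1, …, s_q be sequences of positive reals with f_0 > τ ≥ f_q, satisfying f_i ≤ f_{i-1} − s_i · max{f_{i-1}/τ, 1} for all 1 ≤ i ≤ q. Then f_q + ∑_{i=1}^q s_i ≤ τ(1 + ln(f_0/τ)). -/
/-!
The potential `Φ(x) = min x τ + τ log (max x τ / τ)` is the concave antiderivative of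
`x ↦ 1 / max (x / τ) 1`. By the tangent-line inequality at `f_{i-1}`, the step
`f_i ≤ f_{i-1} - s_i · max (f_{i-1} / τ) 1` lowers `Φ` by at least `s_i`. Summing, the total
`∑ s_i` is at most `Φ(f_0) - Φ(f_q) = τ (1 + ln (f_0 / τ)) - f_q`.
-/

open Real Finset

noncomputable def potential (τ x : ℝ) : ℝ := min x τ + τ * log (max x τ / τ)

section potential

variable {τ a b s : ℝ}

lemma potential_of_le (h : a ≤ τ) : potential τ a = a := by
  rcases eq_or_ne τ 0 with rfl | hτ
  · simp [potential, h]
  · simp [potential, h, hτ]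

lemma potential_of_ge (h : τ ≤ a) : potential τ a = τ * (1 + log (a / τ)) := by
  simp only [potential, min_eq_right h, max_eq_left h]; ring

lemma potential_le_add_div (hτ : 0 < τ) (a b : ℝ) :
    potential τ b ≤ potential τ a + (b - a) / max (a / τ) 1 := by
  rcases le_total a τ with ha | ha
  · rw [potential_of_le ha, max_eq_right ((div_le_one hτ).2 ha)]
    rcases le_total b τ with hb | hb
    · rw [potential_of_le hb]; linarith
    · have hlog := log_le_sub_one_of_pos (div_pos (hτ.trans_le hb) hτ)
      calc potential τ b = τ + τ * log (b / τ) := by rw [potential_of_ge hb]; ring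
        _ ≤ τ + τ * (b / τ - 1) := by gcongr
        _ = a + (b - a) / 1 := by field_simp; ring
  · have hapos : 0 < a := hτ.trans_le ha
    have hM : 0 < a / τ := div_pos hapos hτ
    have hdiv : (b - a) / (a / τ) = τ * (b / a - 1) := by field_simp
    rw [potential_of_ge ha, max_eq_left ((one_le_div hτ).2 ha), hdiv]
    rcases le_total b τ with hb | hb
    · have hlog := one_sub_inv_le_log_of_pos hM
      rw [inv_div] at hlog
      have : b * (1 - τ / a) ≤ τ * (1 - τ / a) :=
        mul_le_mul_of_nonneg_right hb (by rw [sub_nonneg, div_le_one hapos]; exact ha)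
      rw [potential_of_le hb]
      have : τ * (1 - τ / a) ≤ τ * log (a / τ) := by gcongr
      have : τ * (b / a - 1) = b * (τ / a) - τ := by field_simp
      linarith
    · have hbpos : 0 < b := hτ.trans_le hb
      have hlog := log_le_sub_one_of_pos (div_pos hbpos hapos)
      have hsplit : log (b / τ) = log (b / a) + log (a / τ) := by
        rw [← log_mul (div_pos hbpos hapos).ne' hM.ne', div_mul_div_cancel₀ hapos.ne']
      rw [potential_of_ge hb, hsplit]
      nlinarith

lemma potential_add_le (hτ : 0 < τ) (h : b ≤ a - s * max (a / τ) 1) :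
    potential τ b + s ≤ potential τ a := by
  have hM : 0 < max (a / τ) 1 := lt_max_of_lt_right one_pos
  have hs : s ≤ (a - b) / max (a / τ) 1 := by rw [le_div_iff₀ hM]; linarith
  have := potential_le_add_div hτ a b
  rw [← neg_sub a b, neg_div] at this
  linarith

end potential

lemma add_sum_Icc_le_of_add_le {g s : ℕ → ℝ} {n : ℕ}
    (h : ∀ i, 1 ≤ i → i ≤ n → g i + s i ≤ g (i - 1)) :
    g n + ∑ i ∈ Icc 1 n, s i ≤ g 0 := by
  induction n with
  | zero => simp
  | succ n ih =>
    rw [sum_Icc_succ_top (Nat.le_add_left 1 n)]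
    have := h (n + 1) (Nat.le_add_left 1 n) le_rfl
    have := ih fun i hi hin => h i hi (hin.trans n.le_succ)
    simp only [add_tsub_cancel_right] at *
    linarith

theorem stmt_1_general (τ : ℝ) (q : ℕ) (f s : ℕ → ℝ)
    (hτ : 0 < τ)
    (h0 : τ < f 0) (hq : f q ≤ τ)
    (hrec : ∀ i, 1 ≤ i → i ≤ q →
      f i ≤ f (i - 1) - s i * max (f (i - 1) / τ) 1) :
    f q + ∑ i ∈ Finset.Icc 1 q, s i ≤ τ * (1 + Real.log (f 0 / τ)) := by
  have := add_sum_Icc_le_of_add_le (g := potential τ ∘ f) fun i hi hiq =>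
    potential_add_le hτ (hrec i hi hiq)
  rwa [Function.comp_apply, Function.comp_apply, potential_of_le hq, potential_of_ge h0.le] at this

/-- Let τ > 0 and f_0,…,f_q, s_1,…,s_q be positive reals with
f_0 > τ ≥ f_q and f_i ≤ f_{i-1} − s_i · max{f_{i-1}/τ, 1}. Then
f_q + ∑_{i=1}^q s_i ≤ τ(1 + ln(f_0/τ)). -/
theorem stmt_1 (τ : ℝ) (q : ℕ) (f s : ℕ → ℝ)
    (hτ : 0 < τ)
    (hf : ∀ i ≤ q, 0 < f i)
    (hs : ∀ i, 1 ≤ i → i ≤ q → 0 < s i)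
    (h0 : τ < f 0) (hq : f q ≤ τ)
    (hrec : ∀ i, 1 ≤ i → i ≤ q →
      f i ≤ f (i - 1) - s i * max (f (i - 1) / τ) 1) :
    f q + ∑ i ∈ Finset.Icc 1 q, s i ≤ τ * (1 + Real.log (f 0 / τ)) :=
  stmt_1_general τ q f s hτ h0 hq hrec
end

section
/- Let G be a graph, Q a subset of vertices, R a terminal set with V = Q ∪ R, and r : R × R → {0,1,2} a requirement function. Suppose G is minimally (r,Q)-connected (i.e., (r,Q)-connected but no proper spanning subgraph is). Let G' = (V', E') be a 2-connected block of G and R' = R ∩ V'. Then |R'| ≥ 2. -/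
open SimpleGraph

variable {V : Type*}

/-- `QConn G Q u v k`: there are `k` pairwise edge-disjoint `uv`-paths whose internal
vertices belonging to `Q` are pairwise disjoint (i.e. `k` pairwise
`(E ∪ Q \ {u,v})`-disjoint `uv`-paths), so `λ^Q_G(u,v) ≥ k`. -/
def QConn (G : SimpleGraph V) (Q : Set V) (u v : V) (k : ℕ) : Prop :=
  ∃ P : Fin k → G.Walk u v,
    (∀ i, (P i).IsPath) ∧
    ∀ i j, i ≠ j →
      (∀ e ∈ (P i).edges, e ∉ (P j).edges) ∧
      (∀ w ∈ Q, w ≠ u → w ≠ v → w ∈ (P i).support → w ∉ (P j).support)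

/-- `G` is `(r,Q)`-connected: `λ^Q_G(u,v) ≥ r u v` for all terminals `u, v ∈ R`. -/
def RQConnected (G : SimpleGraph V) (Q R : Set V) (r : V → V → ℕ) : Prop :=
  ∀ u ∈ R, ∀ v ∈ R, QConn G Q u v (r u v)

/-- Minimally `(r,Q)`-connected: `(r,Q)`-connected, but deleting any edge destroys this. -/
def MinRQConnected (G : SimpleGraph V) (Q R : Set V) (r : V → V → ℕ) : Prop :=
  RQConnected G Q R r ∧
  ∀ e ∈ G.edgeSet, ¬ RQConnected (G.deleteEdges {e}) Q R r

/-- A graph is 2-connected if it has at least 3 vertices and removing any vertex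
leaves it connected. -/
def Is2Connected {W : Type*} (G : SimpleGraph W) : Prop :=
  3 ≤ Nat.card W ∧ ∀ v : W, (G.induce {w | w ≠ v}).Connected

/-- A block of `G`: an inclusion-maximal 2-connected subgraph, or a bridge
(with its endpoints). -/
def IsBlock (G : SimpleGraph V) (H : G.Subgraph) : Prop :=
  (Is2Connected H.coe ∧ ∀ K : G.Subgraph, H ≤ K → Is2Connected K.coe → K = H) ∨
  (∃ (a b : V) (hab : G.Adj a b), G.IsBridge s(a, b) ∧ H = G.subgraphOfAdj hab)

/-!
Take an edge `ab` of `H`. By minimality some terminals `u, v` lose their requirement when `ab` is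
deleted. Requirement 1 is impossible since `ab` lies on a cycle of `H`, so `r u v = 2` and `ab` lies
on one of two `Q`-disjoint `uv`-paths `P₁, P₂`, say on `P₁`. Let `x` and `y` be the first and the
last vertex of `P₁` in `H`. If `x = y`, shortcutting `P₁` through `x` avoids `ab`, and with `P₂` it
restores the requirement. Otherwise, since `H` is a maximal 2-connected subgraph, every walk from
`u` enters `H` at the same vertex (two entry points would give an ear of `H`), so `P₂` also passes
through `x` and, symmetrically, through `y`. A vertex shared by `P₁` and `P₂` is an end or not in
`Q`, so `x` and `y` are two terminals of `H`.
-/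

lemma Set.exists_mem_ne_ne_of_two_lt_ncard {α : Type*} {s : Set α} (h : 2 < s.ncard) (a b : α) :
    ∃ c ∈ s, c ≠ a ∧ c ≠ b := by
  have hab : ({a, b} : Set α).ncard < s.ncard :=
    ((Set.ncard_insert_le a {b}).trans (by simp)).trans_lt h
  obtain ⟨c, hc, hcab⟩ := Set.exists_mem_notMem_of_ncard_lt_ncard hab
  exact ⟨c, hc, by simpa [not_or] using hcab⟩

namespace SimpleGraph

variable {G : SimpleGraph V}

lemma Subgraph.Connected.exists_walk {K : G.Subgraph} (h : K.Connected) {a b : V}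
    (ha : a ∈ K.verts) (hb : b ∈ K.verts) : ∃ p : G.Walk a b, p.toSubgraph ≤ K :=
  ((Subgraph.connected_iff_forall_exists_walk_subgraph K).mp h).2 ha hb

lemma Subgraph.connected_deleteVerts_iff {H : G.Subgraph} {z : V} (hz : z ∈ H.verts) :
    (H.deleteVerts {z}).Connected ↔ (H.coe.induce {w | w ≠ ⟨z, hz⟩}).Connected := by
  have hset : {w : H.verts | (w : V) ∈ H.verts \ {z}} = {w | w ≠ ⟨z, hz⟩} := by
    ext w
    simp [Subtype.ext_iff]
  rw [Subgraph.connected_iff', (Subgraph.coeInduceIso _ Set.sdiff_subset).connected_iff, hset]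

lemma Walk.toSubgraph_le_deleteVerts_iff {K : G.Subgraph} {z u v : V} {p : G.Walk u v} :
    p.toSubgraph ≤ K.deleteVerts {z} ↔ p.toSubgraph ≤ K ∧ z ∉ p.support := by
  refine ⟨fun h ↦ ⟨h.trans Subgraph.deleteVerts_le, fun hz ↦ ?_⟩, fun ⟨h, hz⟩ ↦ ⟨?_, ?_⟩⟩
  · exact (Subgraph.verts_mono h (p.mem_verts_toSubgraph.mpr hz)).2 rfl
  · intro w hw
    exact ⟨Subgraph.verts_mono h hw, by rintro rfl; exact hz (p.mem_verts_toSubgraph.mp hw)⟩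
  · intro a b hab
    refine Subgraph.deleteVerts_adj.mpr ⟨h.1 (p.toSubgraph.edge_vert hab), ?_,
      h.1 (p.toSubgraph.edge_vert hab.symm), ?_, h.2 hab⟩
    · rintro rfl; exact hz (Walk.mem_support_of_adj_toSubgraph hab)
    · rintro rfl; exact hz (Walk.mem_support_of_adj_toSubgraph hab.symm)

lemma Walk.IsPath.exists_walk_to_end_avoiding {u v c z : V} {p : G.Walk u v}
    (hp : p.IsPath) (hc : c ∈ p.support) (hzc : z ≠ c) :
    ∃ w, (w = u ∨ w = v) ∧ ∃ q : G.Walk c w, q.toSubgraph ≤ p.toSubgraph ∧ z ∉ q.support := by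
  classical
  have hsplit : (p.takeUntil c hc).toSubgraph ⊔ (p.dropUntil c hc).toSubgraph = p.toSubgraph := by
    rw [← Walk.toSubgraph_append, p.take_spec hc]
  by_cases hz : z ∈ (p.takeUntil c hc).support
  · refine ⟨v, Or.inr rfl, p.dropUntil c hc, hsplit ▸ le_sup_right, fun hz' ↦ ?_⟩
    have hnodup := hp.support_nodup
    rw [← p.take_spec hc, Walk.support_append] at hnodup
    rw [← Walk.cons_tail_support, List.mem_cons] at hz'
    exact hz'.elim hzc (List.disjoint_of_nodup_append hnodup hz)
  · exact ⟨u, Or.inl rfl, (p.takeUntil c hc).reverse, by simpa using hsplit ▸ le_sup_left,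
      by simpa using hz⟩

lemma Subgraph.exists_walk_to_deleteVerts_of_mem_sup {H : G.Subgraph}
    {x y z c : V} {p : G.Walk x y} (hp : p.IsPath) (hx : x ∈ H.verts) (hy : y ∈ H.verts)
    (hc : c ∈ ((H ⊔ p.toSubgraph).deleteVerts {z}).verts) :
    ∃ h ∈ (H.deleteVerts {z}).verts, ∃ q : G.Walk c h,
      q.toSubgraph ≤ (H ⊔ p.toSubgraph).deleteVerts {z} := by
  obtain ⟨hcH | hcp, hcz⟩ := hc
  · refine ⟨c, ⟨hcH, hcz⟩, .nil, Walk.toSubgraph_le_deleteVerts_iff.mpr ⟨?_, ?_⟩⟩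
    · exact (singletonSubgraph_le_iff _ _).mpr (Or.inl hcH)
    · simpa [eq_comm] using hcz
  obtain ⟨w, hw, q, hqp, hzq⟩ :=
    hp.exists_walk_to_end_avoiding (p.mem_verts_toSubgraph.mp hcp) (Ne.symm hcz)
  have hwH : w ∈ H.verts := by rcases hw with rfl | rfl <;> assumption
  exact ⟨w, ⟨hwH, fun hwz ↦ hzq (hwz ▸ q.end_mem_support)⟩, q,
    Walk.toSubgraph_le_deleteVerts_iff.mpr ⟨hqp.trans le_sup_right, hzq⟩⟩

lemma Reachable.deleteEdges_of_not_isBridge {a b u v : V} (hab : ¬ G.IsBridge s(a, b))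
    (h : G.Reachable u v) : (G.deleteEdges {s(a, b)}).Reachable u v := by
  rw [isBridge_iff, not_not] at hab
  obtain ⟨p⟩ := h
  induction p with
  | nil => rfl
  | @cons x y _ hxy _ ih =>
    refine Reachable.trans ?_ ih
    by_cases he : s(x, y) = s(a, b)
    · rcases Sym2.eq_iff.mp he with ⟨rfl, rfl⟩ | ⟨rfl, rfl⟩
      exacts [hab, hab.symm]
    · exact Adj.reachable (deleteEdges_adj.mpr ⟨hxy, he⟩)

namespace Walk

def HitsOnlyAtEnd (S : Set V) {u x : V} (p : G.Walk u x) : Prop :=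
  x ∈ S ∧ ∀ w ∈ p.support, w ∈ S → w = x

lemma exists_hitsOnlyAtEnd_takeUntil [DecidableEq V] (S : Set V) {u v : V} (p : G.Walk u v)
    (h : ∃ w ∈ p.support, w ∈ S) :
    ∃ x, ∃ hx : x ∈ p.support, (p.takeUntil x hx).HitsOnlyAtEnd S := by
  classical
  obtain ⟨x, hxs, hx, hfirst⟩ := p.exists_mem_support_forall_mem_support_imp_eq
    (p.support.toFinset.filter (· ∈ S))
    (by obtain ⟨w, hw, hwS⟩ := h; exact ⟨w, by simp [hw, hwS]⟩)
  refine ⟨x, hx, (by simpa using hxs : x ∈ p.support ∧ x ∈ S).2, fun t ht htS ↦ hfirst t ?_ ht⟩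
  simpa using ⟨p.support_takeUntil_subset_support hx ht, htS⟩

lemma HitsOnlyAtEnd.not_mem_edges {S : Set V} {u x a b : V} {p : G.Walk u x}
    (hp : p.HitsOnlyAtEnd S) (ha : a ∈ S) (hb : b ∈ S) : s(a, b) ∉ p.edges := fun he ↦ by
  have hab := p.adj_of_mem_edges he
  rw [hp.2 a (p.fst_mem_support_of_mem_edges he) ha,
    hp.2 b (p.snd_mem_support_of_mem_edges he) hb] at hab
  exact hab.ne rfl

lemma HitsOnlyAtEnd.append_of_disjoint {S : Set V} {u v x : V} {p : G.Walk u v}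
    {q : G.Walk v x} (hp : ∀ w ∈ p.support, w ∉ S) (hq : q.HitsOnlyAtEnd S) :
    (p.append q).HitsOnlyAtEnd S := by
  refine ⟨hq.1, fun w hw hwS ↦ ?_⟩
  rcases (mem_support_append_iff p q).mp hw with hw | hw
  · exact absurd hwS (hp w hw)
  · exact hq.2 w hw hwS

end Walk

end SimpleGraph

section TwoConnected

variable {G : SimpleGraph V} {H : G.Subgraph}

lemma is2Connected_coe_iff :
    Is2Connected H.coe ↔ 3 ≤ H.verts.ncard ∧ ∀ z ∈ H.verts, (H.deleteVerts {z}).Connected := by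
  simp only [Is2Connected, Nat.card_coe_set_eq, Subtype.forall]
  exact and_congr_right fun _ ↦ forall₂_congr fun z hz ↦
    (Subgraph.connected_deleteVerts_iff hz).symm

lemma Is2Connected.verts_finite (h : Is2Connected H.coe) : H.verts.Finite :=
  Set.finite_of_ncard_pos (by have := (is2Connected_coe_iff.mp h).1; omega)

lemma Is2Connected.connected (h : Is2Connected H.coe) : H.Connected := by
  obtain ⟨hcard, hconn⟩ := is2Connected_coe_iff.mp h
  obtain ⟨a, ha, b, hb, c, hc, hab, hac, hbc⟩ := (Set.two_lt_ncard h.verts_finite).mp hcard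
  refine (Subgraph.connected_sup (hconn a ha).preconnected (hconn b hb).preconnected
    ⟨c, ?_⟩).mono (sup_le Subgraph.deleteVerts_le Subgraph.deleteVerts_le) ?_
  · simp [hc, hac.symm, hbc.symm]
  · ext w
    by_cases hwa : w = a
    · simp [hwa, ha, hab]
    · simp +contextual [hwa]

lemma Is2Connected.connected_deleteVerts (h : Is2Connected H.coe) (z : V) :
    (H.deleteVerts {z}).Connected := by
  by_cases hz : z ∈ H.verts
  · exact (is2Connected_coe_iff.mp h).2 z hz
  · rw [Subgraph.deleteVerts, Set.sdiff_singleton_eq_self hz, Subgraph.induce_self_verts]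
    exact h.connected

lemma Is2Connected.exists_adj (h : Is2Connected H.coe) : ∃ a b, H.Adj a b := by
  obtain ⟨hcard, -⟩ := is2Connected_coe_iff.mp h
  obtain ⟨a, ha, b, hb, hab⟩ := (Set.one_lt_ncard h.verts_finite).mp (by omega)
  obtain ⟨p, hp⟩ := h.connected.exists_walk ha hb
  exact ⟨a, p.snd, hp.2 (p.toSubgraph_adj_snd (Walk.not_nil_of_ne hab))⟩

lemma Is2Connected.not_isBridge (h : Is2Connected H.coe) {a b : V} (hab : H.Adj a b) :
    ¬ G.IsBridge s(a, b) := by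
  obtain ⟨c, hc, hca, hcb⟩ :=
    Set.exists_mem_ne_ne_of_two_lt_ncard (is2Connected_coe_iff.mp h).1 a b
  obtain ⟨p, hp⟩ := (h.connected_deleteVerts b).exists_walk ⟨hab.fst_mem, hab.ne⟩ ⟨hc, hcb⟩
  obtain ⟨q, hq⟩ := (h.connected_deleteVerts a).exists_walk ⟨hc, hca⟩ ⟨hab.snd_mem, hab.ne.symm⟩
  rw [Walk.toSubgraph_le_deleteVerts_iff] at hp hq
  rw [isBridge_iff, not_not, reachable_deleteEdges_iff_exists_walk]
  refine ⟨p.append q, fun he ↦ ?_⟩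
  rcases List.mem_append.mp (Walk.edges_append p q ▸ he) with he | he
  · exact hp.2 (p.snd_mem_support_of_mem_edges he)
  · exact hq.2 (q.fst_mem_support_of_mem_edges he)

theorem Is2Connected.sup_toSubgraph (h : Is2Connected H.coe) {x y : V} {p : G.Walk x y}
    (hp : p.IsPath) (hx : x ∈ H.verts) (hy : y ∈ H.verts) :
    Is2Connected (H ⊔ p.toSubgraph).coe := by
  set K := H ⊔ p.toSubgraph
  have hKcard : 3 ≤ K.verts.ncard := by
    refine (is2Connected_coe_iff.mp h).1.trans
      (Set.ncard_le_ncard (Subgraph.verts_mono le_sup_left) ?_)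
    simpa [K] using h.verts_finite.union p.support.finite_toSet
  refine is2Connected_coe_iff.mpr ⟨hKcard, fun z _ ↦ ?_⟩
  rw [Subgraph.connected_iff_forall_exists_walk_subgraph]
  refine ⟨?_, fun ha hb ↦ ?_⟩
  · obtain ⟨w, hw, hwz⟩ := Set.exists_ne_of_one_lt_ncard (s := K.verts) (by omega) z
    exact ⟨w, hw, hwz⟩
  obtain ⟨a', ha', qa, hqa⟩ := Subgraph.exists_walk_to_deleteVerts_of_mem_sup hp hx hy ha
  obtain ⟨b', hb', qb, hqb⟩ := Subgraph.exists_walk_to_deleteVerts_of_mem_sup hp hx hy hb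
  obtain ⟨m, hm⟩ := (h.connected_deleteVerts z).exists_walk ha' hb'
  refine ⟨qa.append (m.append qb.reverse), ?_⟩
  simp only [Walk.toSubgraph_append, Walk.toSubgraph_reverse, sup_le_iff]
  exact ⟨hqa, hm.trans (Subgraph.deleteVerts_mono le_sup_left), hqb⟩

end TwoConnected

section Blocks

variable {G : SimpleGraph V} {H : G.Subgraph}

lemma IsBlock.maximal (hb : IsBlock G H) (h : Is2Connected H.coe) :
    Maximal (fun K : G.Subgraph ↦ Is2Connected K.coe) H := by
  rcases hb with ⟨-, hmax⟩ | ⟨a, b, hab, -, rfl⟩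
  · exact ⟨h, fun K hK hle ↦ (hmax K hle hK).le⟩
  · obtain ⟨c, hc, hca, hcb⟩ :=
      Set.exists_mem_ne_ne_of_two_lt_ncard (is2Connected_coe_iff.mp h).1 a b
    simp_all

theorem SimpleGraph.Walk.HitsOnlyAtEnd.eq_of_maximal
    (hH : Maximal (fun K : G.Subgraph ↦ Is2Connected K.coe) H) {u x₁ x₂ : V}
    {p₁ : G.Walk u x₁} {p₂ : G.Walk u x₂} (h₁ : p₁.HitsOnlyAtEnd H.verts)
    (h₂ : p₂.HitsOnlyAtEnd H.verts) : x₁ = x₂ := by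
  classical
  by_contra hne
  set W := p₁.reverse.append p₂
  have hle : W.bypass.toSubgraph ≤ H :=
    sup_eq_left.mp (hH.eq_of_ge (hH.prop.sup_toSubgraph W.bypass_isPath h₁.1 h₂.1) le_sup_left)
  have hadj := W.bypass.toSubgraph_adj_snd (Walk.not_nil_of_ne hne)
  have hW : s(x₁, W.bypass.snd) ∈ W.edges :=
    W.edges_bypass_subset_edges (Walk.adj_toSubgraph_iff_mem_edges.mp hadj)
  replace hadj := hle.2 hadj
  rw [Walk.edges_append, Walk.edges_reverse, List.mem_append, List.mem_reverse] at hW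
  rcases hW with hW | hW
  · exact h₁.not_mem_edges hadj.fst_mem hadj.snd_mem hW
  · exact h₂.not_mem_edges hadj.fst_mem hadj.snd_mem hW

theorem SimpleGraph.Walk.HitsOnlyAtEnd.mem_support_of_maximal
    (hH : Maximal (fun K : G.Subgraph ↦ Is2Connected K.coe) H) {u v x y : V}
    {p : G.Walk u x} {q : G.Walk v y} (hp : p.HitsOnlyAtEnd H.verts)
    (hq : q.HitsOnlyAtEnd H.verts) (hxy : x ≠ y) (P : G.Walk u v) : x ∈ P.support := by
  classical
  by_cases hP : ∃ w ∈ P.support, w ∈ H.verts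
  · obtain ⟨x', hx', hP'⟩ := P.exists_hitsOnlyAtEnd_takeUntil H.verts hP
    rw [hp.eq_of_maximal hH hP']
    exact hx'
  · push Not at hP
    exact absurd (hp.eq_of_maximal hH (hq.append_of_disjoint (p := P) hP)) hxy

end Blocks

section QConnectivity

variable {G : SimpleGraph V} {Q : Set V} {u v : V}

def QDisjoint (Q : Set V) (P₁ P₂ : G.Walk u v) : Prop :=
  (∀ e ∈ P₁.edges, e ∉ P₂.edges) ∧
    ∀ w ∈ Q, w ≠ u → w ≠ v → w ∈ P₁.support → w ∉ P₂.support

lemma QDisjoint.symm {P₁ P₂ : G.Walk u v} (h : QDisjoint Q P₁ P₂) : QDisjoint Q P₂ P₁ :=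
  ⟨fun e h₂ h₁ ↦ h.1 e h₁ h₂, fun w hw hu hv h₂ h₁ ↦ h.2 w hw hu hv h₁ h₂⟩

lemma QDisjoint.mono_left {P₁ P₂ W : G.Walk u v} (h : QDisjoint Q P₁ P₂)
    (hs : W.support ⊆ P₁.support) (he : W.edges ⊆ P₁.edges) : QDisjoint Q W P₂ :=
  ⟨fun e hW ↦ h.1 e (he hW), fun w hw hu hv hW ↦ h.2 w hw hu hv (hs hW)⟩

lemma QDisjoint.mem_of_mem_support {R : Set V} {P₁ P₂ : G.Walk u v} (h : QDisjoint Q P₁ P₂)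
    (hQR : Q ∪ R = Set.univ) (hu : u ∈ R) (hv : v ∈ R) {w : V} (h₁ : w ∈ P₁.support)
    (h₂ : w ∈ P₂.support) : w ∈ R := by
  by_contra hw
  have hwQ : w ∈ Q := ((Set.mem_union _ _ _).mp (hQR ▸ Set.mem_univ w)).resolve_right hw
  exact h.2 w hwQ (by rintro rfl; exact hw hu) (by rintro rfl; exact hw hv) h₁ h₂

lemma qConn_zero : QConn G Q u v 0 :=
  ⟨Fin.elim0, fun i ↦ i.elim0, fun i ↦ i.elim0⟩

lemma qConn_one_iff : QConn G Q u v 1 ↔ G.Reachable u v := by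
  classical
  refine ⟨fun ⟨P, _⟩ ↦ ⟨P 0⟩, fun ⟨p⟩ ↦ ⟨fun _ ↦ p.bypass, fun _ ↦ p.bypass_isPath, ?_⟩⟩
  intro i j hij
  exact absurd (Subsingleton.elim i j) hij

lemma qConn_two_iff : QConn G Q u v 2 ↔
    ∃ P₁ P₂ : G.Walk u v, P₁.IsPath ∧ P₂.IsPath ∧ QDisjoint Q P₁ P₂ := by
  refine ⟨fun ⟨P, hP, hD⟩ ↦ ⟨P 0, P 1, hP 0, hP 1, hD 0 1 (by decide)⟩, ?_⟩
  rintro ⟨P₁, P₂, h₁, h₂, hD⟩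
  refine ⟨![P₁, P₂], fun i ↦ by fin_cases i <;> assumption, fun i j hij ↦ ?_⟩
  fin_cases i <;> fin_cases j
  exacts [absurd rfl hij, hD, hD.symm, absurd rfl hij]

lemma QDisjoint.qConn_two_deleteEdges {W P : G.Walk u v} (h : QDisjoint Q W P) (hP : P.IsPath)
    {e : Sym2 V} (hW : e ∉ W.edges) (hPe : e ∉ P.edges) :
    QConn (G.deleteEdges {e}) Q u v 2 := by
  classical
  have hW' : e ∉ W.bypass.edges := fun he ↦ hW (W.edges_bypass_subset_edges he)
  refine qConn_two_iff.mpr ⟨W.bypass.toDeleteEdge e hW', P.toDeleteEdge e hPe,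
    W.bypass_isPath.toDeleteEdges _ _ _, hP.toDeleteEdges _ _ _, ?_⟩
  have h' := h.mono_left W.support_bypass_subset_support W.edges_bypass_subset_edges
  simpa only [QDisjoint, Walk.edges_transfer, Walk.support_transfer] using h'

end QConnectivity

theorem two_le_ncard_inter_verts_of_mem_edges {G : SimpleGraph V} {Q R : Set V} {u v a b : V}
    {H : G.Subgraph} (hH : Maximal (fun K : G.Subgraph ↦ Is2Connected K.coe) H)
    (hQR : Q ∪ R = Set.univ) (hu : u ∈ R) (hv : v ∈ R) {P₁ P₂ : G.Walk u v}
    (hP₂ : P₂.IsPath) (hd : QDisjoint Q P₁ P₂) (ha : a ∈ H.verts) (hb : b ∈ H.verts)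
    (he : s(a, b) ∈ P₁.edges) (hq : ¬ QConn (G.deleteEdges {s(a, b)}) Q u v 2) :
    2 ≤ (R ∩ H.verts).ncard := by
  classical
  have hmeet : ∃ w ∈ P₁.support, w ∈ H.verts := ⟨a, P₁.fst_mem_support_of_mem_edges he, ha⟩
  obtain ⟨x, hx, hA⟩ := P₁.exists_hitsOnlyAtEnd_takeUntil H.verts hmeet
  obtain ⟨y, hy, hB⟩ := P₁.reverse.exists_hitsOnlyAtEnd_takeUntil H.verts (by simpa using hmeet)
  have hxy : x ≠ y := by
    rintro rfl
    set W := (P₁.takeUntil x hx).append (P₁.reverse.takeUntil x hy).reverse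
    have hWs : W.support ⊆ P₁.support := by
      intro w hw
      rcases (Walk.mem_support_append_iff _ _).mp hw with hw | hw
      · exact P₁.support_takeUntil_subset_support hx hw
      · simpa using P₁.reverse.support_takeUntil_subset_support hy (by simpa using hw)
    have hWe : W.edges ⊆ P₁.edges := by
      intro e he
      rcases List.mem_append.mp (Walk.edges_append _ _ ▸ he) with he | he
      · exact P₁.edges_takeUntil_subset_edges hx he
      · simpa using P₁.reverse.edges_takeUntil_subset_edges hy (by simpa using he)
    have hWab : s(a, b) ∉ W.edges := by
      simp only [W, Walk.edges_append, Walk.edges_reverse, List.mem_append, List.mem_reverse,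
        not_or]
      exact ⟨hA.not_mem_edges ha hb, hB.not_mem_edges ha hb⟩
    exact hq ((hd.mono_left hWs hWe).qConn_two_deleteEdges hP₂ hWab (hd.1 _ he))
  have hxR : x ∈ R :=
    hd.mem_of_mem_support hQR hu hv hx (hA.mem_support_of_maximal hH hB hxy P₂)
  have hyR : y ∈ R := hd.mem_of_mem_support hQR hu hv (by simpa using hy)
    (by simpa using hB.mem_support_of_maximal hH hA hxy.symm P₂.reverse)
  calc 2 = ({x, y} : Set V).ncard := (Set.ncard_pair hxy).symm
    _ ≤ (R ∩ H.verts).ncard :=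
      Set.ncard_le_ncard
        (Set.insert_subset ⟨hxR, hA.1⟩ (Set.singleton_subset_iff.mpr ⟨hyR, hB.1⟩))
        (hH.prop.verts_finite.subset Set.inter_subset_right)

theorem stmt_3_general (G : SimpleGraph V) (Q R : Set V) (r : V → V → ℕ)
    (hQR : Q ∪ R = Set.univ) (hr : ∀ u v, r u v ≤ 2)
    (hmin : MinRQConnected G Q R r)
    (H : G.Subgraph) (hblock : IsBlock G H) (h2 : Is2Connected H.coe) :
    2 ≤ (R ∩ H.verts).ncard := by
  have hH := hblock.maximal h2
  obtain ⟨a, b, hab⟩ := h2.exists_adj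
  obtain ⟨u, hu, v, hv, hq⟩ :
      ∃ u ∈ R, ∃ v ∈ R, ¬ QConn (G.deleteEdges {s(a, b)}) Q u v (r u v) := by
    simpa [RQConnected] using hmin.2 s(a, b) hab.adj_sub
  have hG := hmin.1 u hu v hv
  have := hr u v
  interval_cases h : r u v
  · exact absurd qConn_zero hq
  · exact absurd (qConn_one_iff.mpr
      ((qConn_one_iff.mp hG).deleteEdges_of_not_isBridge (h2.not_isBridge hab))) hq
  · obtain ⟨P₁, P₂, hP₁, hP₂, hd⟩ := qConn_two_iff.mp hG
    by_cases h₁ : s(a, b) ∈ P₁.edges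
    · exact two_le_ncard_inter_verts_of_mem_edges hH hQR hu hv hP₂ hd hab.fst_mem hab.snd_mem
        h₁ hq
    by_cases h₂ : s(a, b) ∈ P₂.edges
    · exact two_le_ncard_inter_verts_of_mem_edges hH hQR hu hv hP₁ hd.symm hab.fst_mem
        hab.snd_mem h₂ hq
    exact absurd (hd.qConn_two_deleteEdges hP₂ h₁ h₂) hq

/-- if `G` is minimally `(r,Q)`-connected with `{0,1,2}`-requirements and
`Q ∪ R = V`, then every 2-connected block `G'` of `G` contains at least 2 terminals. -/
theorem stmt_3 [Fintype V] (G : SimpleGraph V) (Q R : Set V) (r : V → V → ℕ)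
    (hQR : Q ∪ R = Set.univ) (hr : ∀ u v, r u v ≤ 2)
    (hmin : MinRQConnected G Q R r)
    (H : G.Subgraph) (hblock : IsBlock G H) (h2 : Is2Connected H.coe) :
    2 ≤ (R ∩ H.verts).ncard :=
  stmt_3_general G Q R r hQR hr hmin H hblock h2
end

section
/- Let T = (V,F) be a tree rooted at some vertex, with leaf set R and internal vertices S = V \ R, such that every internal vertex has at least 2 children (T is proper). Let F₁ ⊆ F be a set of edges such that every internal vertex u has at least one child connected to u by an edge of F₁. Then there exists a mapping f : S → R such that: (1) for every u ∈ S, f(u) is a descendant leaf of u; (2) the tree paths {P_T(u, f(u)) : u ∈ S} are pairwise edge-disjoint; and (3) for every u ∈ S, the path P_T(u, f(u)) contains at least one edge of F₁. -/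
/-!
Pick, at every internal vertex `u`, a child `d u` joined by an `F₁`-edge and a different child
`e u`. The path of `u` goes down to `d u` and then always to the `e`-child until it reaches a leaf.
Each edge on such a path is either the first one, an edge `(p, d p)`, and then the path starts
at `p`, or an edge `(p, e p)`, and then the path already passes through `p`. Since `d p ≠ e p`,
two paths sharing an edge share the edge above it as well, and climbing up they end up with the
same start.
-/

/-- In a rooted tree given by a parent map, the set of children of `u`. -/
def childSet {V : Type*} (root : V) (parent : V → V) (u : V) : Set V :=
  {v | parent v = u ∧ v ≠ root}

open Relation

namespace RootedTree

def IsDescentAlong {V : Type*} (parent e : V → V) (x : V) (k : ℕ) : Prop :=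
  ∀ i < k, parent^[i] x = e (parent^[i + 1] x)

variable {V : Type*} {root : V} {parent : V → V}

theorem exists_iterate_of_transGen {a b : V}
    (h : TransGen (fun a b => a ∈ childSet root parent b) a b) :
    a ≠ root ∧ ∃ n, 0 < n ∧ parent^[n] a = b := by
  induction h with
  | single hab => exact ⟨hab.2, 1, one_pos, hab.1⟩
  | tail _ hbc ih =>
    obtain ⟨ha, n, -, rfl⟩ := ih
    exact ⟨ha, n + 1, n.succ_pos, by rw [Function.iterate_succ_apply', hbc.1]⟩

theorem childSet_wellFounded [Finite V] (hroot : parent root = root)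
    (hacyc : ∀ v, ∃ n, parent^[n] v = root) :
    WellFounded (fun a b => a ∈ childSet root parent b) := by
  have : Std.Irrefl (TransGen (fun a b => a ∈ childSet root parent b)) := by
    refine ⟨fun a ha => ?_⟩
    obtain ⟨har, n, hn, hcyc⟩ := exists_iterate_of_transGen ha
    obtain ⟨k, hk⟩ := hacyc a
    -- `a` lies on a cycle of `parent` that passes through the fixed point `root`
    have hk' : k ≤ n * k := Nat.le_mul_of_pos_left k hn
    apply har
    calc a = parent^[n * k] a := ((Function.IsPeriodicPt.mul_const hcyc k).eq).symm
      _ = parent^[n * k - k] (parent^[k] a) := by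
          rw [← Function.iterate_add_apply, Nat.sub_add_cancel hk']
      _ = root := by rw [hk, Function.iterate_fixed hroot]
  exact (Finite.wellFounded_of_trans_of_irrefl
    (TransGen fun a b => a ∈ childSet root parent b)).mono fun _ _ h => TransGen.single h

theorem exists_leaf_isDescentAlong [Finite V] (hroot : parent root = root)
    (hacyc : ∀ v, ∃ n, parent^[n] v = root) {e : V → V}
    (he : ∀ v, (childSet root parent v).Nonempty → e v ∈ childSet root parent v) (v : V) :
    ∃ x k, childSet root parent x = ∅ ∧ parent^[k] x = v ∧ IsDescentAlong parent e x k := by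
  induction v using (childSet_wellFounded hroot hacyc).induction with
  | _ v ih =>
  by_cases hv : (childSet root parent v).Nonempty
  · obtain ⟨x, k, hx, hxk, hdesc⟩ := ih (e v) (he v hv)
    have hup : parent^[k + 1] x = v := by rw [Function.iterate_succ_apply', hxk, (he v hv).1]
    refine ⟨x, k + 1, hx, hup, fun i hi => ?_⟩
    rcases Nat.lt_succ_iff_lt_or_eq.mp hi with hi | rfl
    · exact hdesc i hi
    · rw [hup, hxk]
  · exact ⟨v, 0, Set.not_nonempty_iff_eq_empty.mp hv, rfl, fun i hi => absurd hi i.not_lt_zero⟩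

variable {d e : V → V}

theorem IsDescentAlong.eq_of_iterate_eq_choice {x u : V} {k j : ℕ}
    (hx : IsDescentAlong parent e x k) (hj : j ≤ k) (hxj : parent^[j] x = d u)
    (hdu : parent (d u) = u) (hde : d u ≠ e u) :
    j = k := by
  by_contra hjk
  refine hde ?_
  rw [← hxj, hx j (lt_of_le_of_ne hj hjk), Function.iterate_succ_apply', hxj, hdu]

/-- Paths descending from `d u` along `e` are edge-disjoint for distinct starting vertices `u`. -/
theorem IsDescentAlong.eq_of_iterate_eq {u u' x x' : V} {k k' i j : ℕ}
    (hx : IsDescentAlong parent e x k) (hxk : parent^[k] x = d u) (hdu : parent (d u) = u)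
    (hde : d u ≠ e u)
    (hx' : IsDescentAlong parent e x' k') (hxk' : parent^[k'] x' = d u')
    (hdu' : parent (d u') = u') (hde' : d u' ≠ e u')
    (hi : i ≤ k) (hj : j ≤ k') (hij : parent^[i] x = parent^[j] x') : u = u' := by
  suffices ∀ n i j, i + n = k → j ≤ k' → parent^[i] x = parent^[j] x' → u = u' from
    this (k - i) i j (Nat.add_sub_cancel' hi) hj hij
  intro n
  induction n with
  | zero =>
    rintro i j hik hj hij
    rw [Nat.add_zero] at hik
    subst hik
    have hjk : j = k' := hx'.eq_of_iterate_eq_choice hj (hij ▸ hxk) hdu hde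
    rw [← hdu, ← hdu', ← hxk, ← hxk', ← hjk, hij]
  | succ n ih =>
    rintro i j rfl hj hij
    rcases Nat.lt_or_eq_of_le hj with hj | rfl
    · refine ih (i + 1) (j + 1) (by omega) hj ?_
      rw [Function.iterate_succ_apply', Function.iterate_succ_apply', hij]
    · have := hx.eq_of_iterate_eq_choice (by omega) (hij.trans hxk') hdu' hde'
      omega

end RootedTree

open RootedTree in
theorem stmt_8_general {V : Type*} [Fintype V] (root : V) (parent : V → V)
    (hroot : parent root = root)
    (hacyc : ∀ v, ∃ n, parent^[n] v = root)
    (hproper : ∀ u, (childSet root parent u).Nonempty →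
      2 ≤ (childSet root parent u).ncard)
    (F₁ : Set V)
    (hF₁ : ∀ u, (childSet root parent u).Nonempty →
      ∃ v ∈ childSet root parent u, v ∈ F₁) :
    ∃ (f : V → V) (m : V → ℕ),
      (∀ u, (childSet root parent u).Nonempty →
        childSet root parent (f u) = ∅ ∧ 0 < m u ∧ parent^[m u] (f u) = u) ∧
      (∀ u u', (childSet root parent u).Nonempty →
        (childSet root parent u').Nonempty → u ≠ u' →
        Disjoint {w | ∃ i < m u, w = parent^[i] (f u)}
                 {w | ∃ i < m u', w = parent^[i] (f u')}) ∧
      (∀ u, (childSet root parent u).Nonempty →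
        ∃ i < m u, parent^[i] (f u) ∈ F₁) := by
  choose! d hd hdF using hF₁
  choose! e he hed using fun u hu => Set.exists_ne_of_one_lt_ncard (hproper u hu) (d u)
  choose! x k hleaf hup hdesc using exists_leaf_isDescentAlong hroot hacyc he
  have hdx : ∀ u, (childSet root parent u).Nonempty → parent^[k (d u) + 1] (x (d u)) = u :=
    fun u hu => by rw [Function.iterate_succ_apply', hup, (hd u hu).1]
  refine ⟨fun u => x (d u), fun u => k (d u) + 1,
    fun u hu => ⟨hleaf _, Nat.succ_pos _, hdx u hu⟩, fun u u' hu hu' hne => ?_,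
    fun u hu => ⟨k (d u), Nat.lt_succ_self _, ?_⟩⟩
  · rw [Set.disjoint_left]
    rintro _ ⟨i, hi, rfl⟩ ⟨j, hj, hij⟩
    exact hne <| (hdesc _).eq_of_iterate_eq (hup _) (hd u hu).1 (hed u hu).symm
      (hdesc _) (hup _) (hd u' hu').1 (hed u' hu').symm (Nat.le_of_lt_succ hi)
      (Nat.le_of_lt_succ hj) hij
  · rw [hup]; exact hdF u hu

/-- Let `T` be a proper rooted tree (each internal vertex has at least 2
children), and let `F₁` be a set of edges (an edge being identified with its child
endpoint) such that every internal vertex has a child edge in `F₁`. Then there is a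
mapping `f` from internal vertices to leaves such that `f u` is a descendant leaf of
`u`, the paths from `u` down to `f u` are pairwise edge-disjoint, and each such path
contains an edge of `F₁`. -/
theorem stmt_8 {V : Type*} [Fintype V] (root : V) (parent : V → V)
    (hroot : parent root = root)
    (hacyc : ∀ v, ∃ n, parent^[n] v = root)
    (hproper : ∀ u, (childSet root parent u).Nonempty →
      2 ≤ (childSet root parent u).ncard)
    (F₁ : Set V) (hF₁root : root ∉ F₁)
    (hF₁ : ∀ u, (childSet root parent u).Nonempty →
      ∃ v ∈ childSet root parent u, v ∈ F₁) :
    ∃ (f : V → V) (m : V → ℕ),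
      (∀ u, (childSet root parent u).Nonempty →
        childSet root parent (f u) = ∅ ∧ 0 < m u ∧ parent^[m u] (f u) = u) ∧
      (∀ u u', (childSet root parent u).Nonempty →
        (childSet root parent u').Nonempty → u ≠ u' →
        Disjoint {w | ∃ i < m u, w = parent^[i] (f u)}
                 {w | ∃ i < m u', w = parent^[i] (f u')}) ∧
      (∀ u, (childSet root parent u).Nonempty →
        ∃ i < m u, parent^[i] (f u) ∈ F₁) :=
  stmt_8_general root parent hroot hacyc hproper F₁ hF₁
end

section
/- Any proper rooted tree (every internal vertex has at least 2 children) with leaf set R and internal vertex set S admits a proper mapping: a function f : S → R such that f(u) is a descendant of u for every u ∈ S, and the tree paths {P_T(u, f(u)) : u ∈ S} are pairwise edge-disjoint. -/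
open Function

section RootedTree

variable {V : Type*} {root : V} {parent : V → V}

theorem eq_root_of_isPeriodicPt (hroot : parent root = root)
    (hacyc : ∀ v, ∃ n, parent^[n] v = root) {p : ℕ} {y : V} (hp : 0 < p)
    (hy : IsPeriodicPt parent p y) : y = root := by
  obtain ⟨n, hn⟩ := hacyc y
  calc y = parent^[p * n] y := (hy.mul_const n).eq.symm
    _ = parent^[p * n - n] (parent^[n] y) := by
      rw [← iterate_add_apply, Nat.sub_add_cancel (Nat.le_mul_of_pos_left n hp)]
    _ = root := by rw [hn, iterate_fixed hroot]

theorem wellFounded_mem_childSet [Finite V] (hroot : parent root = root)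
    (hacyc : ∀ v, ∃ n, parent^[n] v = root) :
    WellFounded fun y x : V => y ∈ childSet root parent x := by
  let IsStrictDescendant : V → V → Prop := fun y x => y ≠ root ∧ ∃ n, 0 < n ∧ parent^[n] y = x
  have : IsTrans V IsStrictDescendant := ⟨by
    rintro z y x ⟨hz, m, hm, rfl⟩ ⟨-, n, hn, rfl⟩
    exact ⟨hz, n + m, by omega, iterate_add_apply parent n m z⟩⟩
  have : Std.Irrefl IsStrictDescendant :=
    ⟨fun x ⟨hx, n, hn, hper⟩ => hx (eq_root_of_isPeriodicPt hroot hacyc hn hper)⟩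
  exact Subrelation.wf (fun {y x} h => ⟨h.2, 1, one_pos, h.1⟩)
    (Finite.wellFounded_of_trans_of_irrefl IsStrictDescendant)

theorem exists_leaf_descendant_via
    (hwf : WellFounded fun y x : V => y ∈ childSet root parent x) {c : V → V}
    (hc : ∀ u, (childSet root parent u).Nonempty → c u ∈ childSet root parent u) (x : V) :
    ∃ ℓ n, childSet root parent ℓ = ∅ ∧ parent^[n] ℓ = x ∧
      ∀ k < n, c (parent (parent^[k] ℓ)) = parent^[k] ℓ := by
  induction x using hwf.induction with
  | _ x ih =>
  by_cases hx : (childSet root parent x).Nonempty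
  · obtain ⟨ℓ, n, hℓ, hn, hvia⟩ := ih (c x) (hc x hx)
    refine ⟨ℓ, n + 1, hℓ, by rw [iterate_succ_apply', hn, (hc x hx).1], fun k hk => ?_⟩
    rcases Nat.lt_succ_iff_lt_or_eq.1 hk with hk | rfl
    · exact hvia k hk
    · rw [hn, (hc x hx).1]
  · exact ⟨x, 0, Set.not_nonempty_iff_eq_empty.1 hx, rfl, fun k hk => absurd hk k.not_lt_zero⟩

end RootedTree

theorem iterate_sub_of_first_not {α : Type*} {f : α → α} {Q : α → Prop} {a : α} {n i : ℕ}
    (hQ : ∀ k < n, Q (f^[k] a)) (hn : ¬Q (f^[n] a)) (hi : i ≤ n) :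
    (∀ k < n - i, Q (f^[k] (f^[i] a))) ∧ ¬Q (f^[n - i] (f^[i] a)) ∧
      f^[n - i] (f^[i] a) = f^[n] a := by
  have hsplit : f^[n - i] (f^[i] a) = f^[n] a := by
    rw [← iterate_add_apply, Nat.sub_add_cancel hi]
  refine ⟨fun k hk => ?_, hsplit ▸ hn, hsplit⟩
  rw [← iterate_add_apply]
  exact hQ _ (by omega)

/-- The first iterate leaving `Q` is the same from every point passed on the way to it. -/
theorem iterate_first_not_eq {α : Type*} {f : α → α} {Q : α → Prop} {a a' : α}
    {n n' i i' : ℕ} (hQ : ∀ k < n, Q (f^[k] a)) (hn : ¬Q (f^[n] a))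
    (hQ' : ∀ k < n', Q (f^[k] a')) (hn' : ¬Q (f^[n'] a')) (hi : i ≤ n) (hi' : i' ≤ n')
    (h : f^[i] a = f^[i'] a') : f^[n] a = f^[n'] a' := by
  obtain ⟨hw, hnw, hsplit⟩ := iterate_sub_of_first_not hQ hn hi
  obtain ⟨hw', hnw', hsplit'⟩ := iterate_sub_of_first_not hQ' hn' hi'
  rw [← h] at hw' hnw' hsplit'
  rw [← hsplit, ← hsplit',
    le_antisymm (not_lt.1 fun hlt => hnw (hw' _ hlt)) (not_lt.1 fun hlt => hnw' (hw _ hlt))]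

/-- Every proper rooted tree (each internal vertex has at least 2
children) admits a proper mapping `f` from internal vertices to leaves: `f u` is a
descendant leaf of `u`, and the tree paths from `u` down to `f u` are pairwise
edge-disjoint (edges being identified by their child endpoint). -/
theorem stmt_9 {V : Type*} [Fintype V] (root : V) (parent : V → V)
    (hroot : parent root = root)
    (hacyc : ∀ v, ∃ n, parent^[n] v = root)
    (hproper : ∀ u, (childSet root parent u).Nonempty →
      2 ≤ (childSet root parent u).ncard) :
    ∃ (f : V → V) (m : V → ℕ),
      (∀ u, (childSet root parent u).Nonempty →
        childSet root parent (f u) = ∅ ∧ 0 < m u ∧ parent^[m u] (f u) = u) ∧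
      (∀ u u', (childSet root parent u).Nonempty →
        (childSet root parent u').Nonempty → u ≠ u' →
        Disjoint {w | ∃ i < m u, w = parent^[i] (f u)}
                 {w | ∃ i < m u', w = parent^[i] (f u')}) := by
  have hpair (u : V) : ∃ a b, (childSet root parent u).Nonempty →
      a ∈ childSet root parent u ∧ b ∈ childSet root parent u ∧ a ≠ b := by
    by_cases hu : (childSet root parent u).Nonempty
    · obtain ⟨a, b, ha, hb, hab⟩ := (Set.one_lt_ncard_iff (Set.toFinite _)).1 (hproper u hu)
      exact ⟨a, b, fun _ => ⟨ha, hb, hab⟩⟩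
    · exact ⟨u, u, fun h => absurd h hu⟩
  choose c₁ c₂ hc using hpair
  choose ℓ n hℓ hn hvia using fun u =>
    exists_leaf_descendant_via (wellFounded_mem_childSet hroot hacyc)
      (fun v hv => (hc v hv).1) (c₂ u)
  have hup (u) (hu : (childSet root parent u).Nonempty) : parent (c₂ u) = u := (hc u hu).2.1.1
  have htop (u) (hu : (childSet root parent u).Nonempty) : c₁ (parent (c₂ u)) ≠ c₂ u := by
    rw [hup u hu]; exact (hc u hu).2.2
  refine ⟨ℓ, fun u => n u + 1, fun u hu => ⟨hℓ u, (n u).succ_pos, ?_⟩,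
    fun u u' hu hu' hne => Set.disjoint_left.2 ?_⟩
  · rw [iterate_succ_apply', hn, hup u hu]
  · rintro w ⟨i, hi, rfl⟩ ⟨i', hi', h⟩
    have htops : c₂ u = c₂ u' := by
      simpa only [hn] using iterate_first_not_eq (Q := fun x => c₁ (parent x) = x)
        (hvia u) (by rw [hn]; exact htop u hu) (hvia u') (by rw [hn]; exact htop u' hu')
        (Nat.lt_succ_iff.1 hi) (Nat.lt_succ_iff.1 hi') h
    exact hne (by rw [← hup u hu, htops, hup u' hu'])
end

section
/- Let Δ ≥ 2, let k ≤ Δ be a positive integer, and consider the ST-MSP instance I consisting of Δ terminal points on the unit sphere of a normed space with pairwise distances greater than 1 (plus the center available as a Steiner point). Then opt(I) = 1 while any feasible solution to the rank-k hypergraph relaxation has cost at least Δ/k; i.e., τ_k(I)/opt(I) ≥ Δ/k, where τ_k(I) is the minimum cost of a connected spanning sub-hypergraph of the hypergraph on the Δ terminals whose hyperedges are terminal subsets A of size between 2 and k with cost equal to the optimal ST-MSP value on A. -/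
/-!
The centre of the ball is within distance `1` of every terminal, so one Steiner point
suffices, while without Steiner points the unit-disk graph of pairwise far terminals has no
edges. Hence every hyperedge costs exactly `1`; and in a connected hypergraph on at least two
vertices every vertex lies in a hyperedge, so hyperedges of size `≤ k` number at least `Δ / k`.
-/

open SimpleGraph

/-- The unit-disk graph of a set `P` of points in a metric space. -/
def unitDisk {M : Type*} [MetricSpace M] (P : Set M) : SimpleGraph P :=
  SimpleGraph.fromRel (fun x y => dist (x : M) (y : M) ≤ 1)

/-- `n` Steiner points suffice to connect the terminal set `R` in ST-MSP. -/
def STMSPSol {M : Type*} [MetricSpace M] (R : Set M) (n : ℕ) : Prop :=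
  ∃ S : Finset M, S.card = n ∧ (unitDisk (R ∪ ↑S)).Connected

section STMSP

variable {M : Type*} [MetricSpace M] {P : Set M}

theorem unitDisk_union_center_connected (c : M) (hP : P ⊆ Metric.closedBall c 1) :
    (unitDisk (P ∪ ↑({c} : Finset M))).Connected := by
  let center : ↥(P ∪ ↑({c} : Finset M)) := ⟨c, by simp⟩
  have reach_center : ∀ u, (unitDisk (P ∪ ↑({c} : Finset M))).Reachable u center := by
    rintro ⟨u, hu⟩
    by_cases huc : u = c
    · subst huc; rfl
    · have huP : u ∈ P := by simpa [huc] using hu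
      refine Adj.reachable ⟨fun h => huc (congrArg Subtype.val h), Or.inl ?_⟩
      exact Metric.mem_closedBall.mp (hP huP)
  have : Nonempty ↥(P ∪ ↑({c} : Finset M)) := ⟨center⟩
  exact ⟨fun u v => (reach_center u).trans (reach_center v).symm⟩

theorem stmspSol_one_of_subset_closedBall (c : M) (hP : P ⊆ Metric.closedBall c 1) :
    STMSPSol P 1 :=
  ⟨{c}, Finset.card_singleton c, unitDisk_union_center_connected c hP⟩

theorem unitDisk_eq_bot (hP : P.Pairwise fun x y => 1 < dist x y) : unitDisk P = ⊥ := by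
  ext u v
  refine ⟨?_, False.elim⟩
  rintro ⟨huv, h | h⟩
  · exact (hP u.2 v.2 (Subtype.coe_ne_coe.mpr huv)).not_ge h
  · exact (hP v.2 u.2 (Subtype.coe_ne_coe.mpr (Ne.symm huv))).not_ge h

theorem not_stmspSol_zero (hP : P.Pairwise fun x y => 1 < dist x y) (hnt : P.Nontrivial) :
    ¬ STMSPSol P 0 := by
  rintro ⟨S, hS, hconn⟩
  rw [Finset.card_eq_zero.mp hS, Finset.coe_empty, Set.union_empty, unitDisk_eq_bot hP] at hconn
  obtain ⟨x, hx, y, hy, hxy⟩ := hnt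
  exact hxy (congrArg Subtype.val (reachable_bot.mp (hconn ⟨x, hx⟩ ⟨y, hy⟩)))

theorem sInf_stmspSol_eq_one (c : M) (hball : P ⊆ Metric.closedBall c 1)
    (hP : P.Pairwise fun x y => 1 < dist x y) (hnt : P.Nontrivial) :
    sInf {n | STMSPSol P n} = 1 := by
  have hle : sInf {n | STMSPSol P n} ≤ 1 := Nat.sInf_le (stmspSol_one_of_subset_closedBall c hball)
  have hmem : STMSPSol P (sInf {n | STMSPSol P n}) :=
    Nat.sInf_mem (s := {n | STMSPSol P n}) ⟨1, stmspSol_one_of_subset_closedBall c hball⟩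
  have hne : sInf {n | STMSPSol P n} ≠ 0 := fun h => not_stmspSol_zero hP hnt (h ▸ hmem)
  omega

end STMSP

theorem card_le_sum_card_of_connected_fromRel {V : Type*} [Fintype V] [Nontrivial V]
    [DecidableEq V] (𝓣 : Finset (Finset V))
    (hconn : (fromRel fun i j : V => ∃ A ∈ 𝓣, i ∈ A ∧ j ∈ A).Connected) :
    Fintype.card V ≤ ∑ A ∈ 𝓣, A.card := by
  have hcover : Finset.univ ⊆ 𝓣.biUnion id := by
    intro i _
    obtain ⟨j, -, h | h⟩ := hconn.preconnected.exists_adj_of_nontrivial i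
    · obtain ⟨A, hA, hiA, -⟩ := h; exact Finset.mem_biUnion.mpr ⟨A, hA, hiA⟩
    · obtain ⟨A, hA, -, hiA⟩ := h; exact Finset.mem_biUnion.mpr ⟨A, hA, hiA⟩
  exact (Finset.card_le_card hcover).trans Finset.card_biUnion_le

theorem stmt_10_general {E : Type*} [NormedAddCommGroup E]
    (Δ k : ℕ) (hΔ : 2 ≤ Δ)
    (p : Fin Δ → E) (hnorm : ∀ i, ‖p i‖ = 1)
    (hdist : ∀ i j, i ≠ j → 1 < dist (p i) (p j)) :
    sInf {n : ℕ | STMSPSol (Set.range p) n} = 1 ∧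
    ∀ 𝓣 : Finset (Finset (Fin Δ)),
      (∀ A ∈ 𝓣, 2 ≤ A.card ∧ A.card ≤ k) →
      (SimpleGraph.fromRel (fun i j : Fin Δ => ∃ A ∈ 𝓣, i ∈ A ∧ j ∈ A)).Connected →
      Δ ≤ k * ∑ A ∈ 𝓣, sInf {n : ℕ | STMSPSol (p '' ↑A) n} := by
  have : Nontrivial (Fin Δ) := Fin.nontrivial_iff_two_le.mpr hΔ
  have hinj : Function.Injective p := fun i j h =>
    by_contra fun hij => (hdist i j hij).not_ge (by simp [h])
  have hopt : ∀ A : Set (Fin Δ), A.Nontrivial → sInf {n | STMSPSol (p '' A) n} = 1 := by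
    intro A hA
    refine sInf_stmspSol_eq_one 0 ?_ ?_ (hA.image hinj)
    · rintro _ ⟨i, -, rfl⟩; simp [hnorm i]
    · exact (hinj.injOn.pairwise_image).mpr fun i _ j _ hij => hdist i j hij
  refine ⟨Set.image_univ ▸ hopt _ Set.nontrivial_univ, fun 𝓣 hcard hconn => ?_⟩
  calc Δ = Fintype.card (Fin Δ) := (Fintype.card_fin Δ).symm
    _ ≤ ∑ A ∈ 𝓣, A.card := card_le_sum_card_of_connected_fromRel 𝓣 hconn
    _ ≤ ∑ A ∈ 𝓣, k * sInf {n : ℕ | STMSPSol (p '' ↑A) n} := by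
      refine Finset.sum_le_sum fun A hA => ?_
      rw [hopt A (Finset.one_lt_card_iff_nontrivial.mp (hcard A hA).1), mul_one]
      exact (hcard A hA).2
    _ = k * ∑ A ∈ 𝓣, sInf {n : ℕ | STMSPSol (p '' ↑A) n} := Finset.mul_sum _ _ _ |>.symm

/-- For `Δ` terminals on the unit sphere of a normed space with pairwise
distances `> 1` and `k ≤ Δ`, the ST-MSP optimum is `1`, while any connected spanning
sub-hypergraph of the rank-`k` hypergraph (with hyperedge costs the ST-MSP optima)
has cost at least `Δ/k`; i.e. `τ_k ≥ (Δ/k)·opt`. -/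
theorem stmt_10 {E : Type*} [NormedAddCommGroup E] [NormedSpace ℝ E]
    (Δ k : ℕ) (hΔ : 2 ≤ Δ) (hk1 : 1 ≤ k) (hkΔ : k ≤ Δ)
    (p : Fin Δ → E) (hnorm : ∀ i, ‖p i‖ = 1)
    (hdist : ∀ i j, i ≠ j → 1 < dist (p i) (p j)) :
    sInf {n : ℕ | STMSPSol (Set.range p) n} = 1 ∧
    ∀ 𝓣 : Finset (Finset (Fin Δ)),
      (∀ A ∈ 𝓣, 2 ≤ A.card ∧ A.card ≤ k) →
      (SimpleGraph.fromRel (fun i j : Fin Δ => ∃ A ∈ 𝓣, i ∈ A ∧ j ∈ A)).Connected →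
      Δ ≤ k * ∑ A ∈ 𝓣, sInf {n : ℕ | STMSPSol (p '' ↑A) n} :=
  stmt_10_general Δ k hΔ p hnorm hdist
end

section
/- In the Euclidean plane ℝ², the maximum number of points contained in a closed unit ball such that the distance between any two of them is strictly greater than 1 is exactly 5. -/
/-!
A point at the origin is within distance `1` of any other point of the ball. Otherwise sort the
arguments of six nonzero points: one of the six cyclic gaps is at most `2π / 6 = π / 3`, and by the
law of cosines two points subtending an angle of at most `π / 3` at the origin are no farther
apart than the larger of their norms. Five points are realised by a near-regular pentagon.
-/

open Real InnerProductGeometry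

theorem Fin.mul_le_last_sub_zero_of_le_succ_sub_castSucc {m : ℕ} {θ : ℝ} (b : Fin (m + 1) → ℝ)
    (h : ∀ k : Fin m, θ ≤ b k.succ - b k.castSucc) : m * θ ≤ b (Fin.last m) - b 0 := by
  induction m with
  | zero => simp
  | succ m ih =>
    have hinit := ih (fun k ↦ b k.castSucc) (fun k ↦ h k.castSucc)
    have hlast := h (Fin.last m)
    simp only [Fin.castSucc_zero, Fin.succ_last] at hinit hlast
    push_cast
    linarith

theorem Real.exists_cos_two_pi_div_le_cos_sub {n : ℕ} (a : Fin (n + 2) → ℝ)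
    (ha : ∀ i j, a i - a j < 2 * π) :
    ∃ i j, i ≠ j ∧ cos (2 * π / (n + 2)) ≤ cos (a i - a j) := by
  set θ := 2 * π / (n + 2)
  have hθ : θ ≤ π := by
    rw [div_le_iff₀ (by positivity)]
    nlinarith [pi_pos, (n.cast_nonneg : (0 : ℝ) ≤ n)]
  set σ := Tuple.sort a
  have hmono : Monotone (a ∘ σ) := Tuple.monotone_sort a
  by_cases hgap : ∃ k : Fin (n + 1), a (σ k.succ) - a (σ k.castSucc) ≤ θ
  · obtain ⟨k, hk⟩ := hgap
    refine ⟨σ k.succ, σ k.castSucc, σ.injective.ne k.castSucc_lt_succ.ne', ?_⟩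
    exact cos_le_cos_of_nonneg_of_le_pi (sub_nonneg.2 (hmono k.castSucc_lt_succ.le)) hθ hk
  · push Not at hgap
    have hspan := Fin.mul_le_last_sub_zero_of_le_succ_sub_castSucc (a ∘ σ) fun k ↦ (hgap k).le
    simp only [Function.comp_apply] at hspan
    refine ⟨σ (Fin.last _), σ 0, σ.injective.ne (Fin.last_pos).ne', ?_⟩
    have hwrap : 2 * π - (a (σ (Fin.last _)) - a (σ 0)) ≤ θ := by
      have : ((n + 1 : ℕ) : ℝ) * θ = 2 * π - θ := by
        simp only [θ]; field_simp; push_cast; ring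
      linarith
    rw [← cos_two_pi_sub (a (σ (Fin.last _)) - a (σ 0))]
    exact cos_le_cos_of_nonneg_of_le_pi (by linarith [ha (σ (Fin.last _)) (σ 0)]) hθ hwrap

theorem InnerProductGeometry.norm_sub_le_max_of_one_half_le_cos_angle {V : Type*}
    [NormedAddCommGroup V] [InnerProductSpace ℝ V] {x y : V} (h : 1 / 2 ≤ cos (angle x y)) :
    ‖x - y‖ ≤ max ‖x‖ ‖y‖ := by
  have hx := norm_nonneg x
  have hy := norm_nonneg y
  have hcos : ‖x - y‖ ^ 2 ≤ ‖x‖ ^ 2 + ‖y‖ ^ 2 - ‖x‖ * ‖y‖ := by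
    rw [sq, norm_sub_sq_eq_norm_sq_add_norm_sq_sub_two_mul_norm_mul_norm_mul_cos_angle]
    nlinarith [mul_nonneg hx hy]
  refine abs_le_of_sq_le_sq' ?_ (le_max_of_le_left hx) |>.2
  rcases le_total ‖x‖ ‖y‖ with hxy | hxy
  · rw [max_eq_right hxy]; nlinarith
  · rw [max_eq_left hxy]; nlinarith

theorem Complex.cos_angle_eq_cos_arg_sub {x y : ℂ} (hx : x ≠ 0) (hy : y ≠ 0) :
    Real.cos (angle x y) = Real.cos (x.arg - y.arg) := by
  rw [Complex.angle_eq_abs_arg hx hy, cos_abs, ← Angle.cos_coe, Complex.arg_div_coe_angle hx hy,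
    ← Angle.coe_sub, Angle.cos_coe]

theorem Complex.exists_dist_le_max_norm (z : Fin 6 → ℂ) :
    ∃ i j, i ≠ j ∧ dist (z i) (z j) ≤ max ‖z i‖ ‖z j‖ := by
  by_cases hzero : ∃ i, z i = 0
  · obtain ⟨i, hi⟩ := hzero
    obtain ⟨j, hji⟩ := exists_ne i
    refine ⟨j, i, hji, ?_⟩
    rw [hi, dist_zero_right]
    exact le_max_left _ _
  push Not at hzero
  have hspan : ∀ i j, (z i).arg - (z j).arg < 2 * π := fun i j ↦ by
    linarith [Complex.arg_le_pi (z i), Complex.neg_pi_lt_arg (z j)]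
  obtain ⟨i, j, hij, hcos⟩ := Real.exists_cos_two_pi_div_le_cos_sub (fun i ↦ (z i).arg) hspan
  refine ⟨i, j, hij, dist_eq_norm (z i) (z j) ▸ norm_sub_le_max_of_one_half_le_cos_angle ?_⟩
  rwa [Complex.cos_angle_eq_cos_arg_sub (hzero i) (hzero j), ← cos_pi_div_three,
    show π / 3 = 2 * π / ((4 : ℕ) + 2) by push_cast; ring]

theorem EuclideanSpace.exists_dist_le_max_norm (p : Fin 6 → EuclideanSpace ℝ (Fin 2)) :
    ∃ i j, i ≠ j ∧ dist (p i) (p j) ≤ max ‖p i‖ ‖p j‖ := by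
  let e := Complex.orthonormalBasisOneI.repr
  obtain ⟨i, j, hij, h⟩ := Complex.exists_dist_le_max_norm (e.symm ∘ p)
  refine ⟨i, j, hij, ?_⟩
  simpa only [Function.comp_apply, LinearIsometryEquiv.dist_map, LinearIsometryEquiv.norm_map]
    using h

/-- A rational approximation of the regular pentagon inscribed in the unit circle, whose sides
`2 sin (π / 5) ≈ 1.18` exceed `1`. -/
noncomputable def pentagon : Fin 5 → EuclideanSpace ℝ (Fin 2) :=
  ![!₂[1, 0], !₂[3 / 10, 19 / 20], !₂[-4 / 5, 59 / 100], !₂[-4 / 5, -59 / 100],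
    !₂[3 / 10, -19 / 20]]

theorem norm_pentagon_le_one (i : Fin 5) : ‖pentagon i‖ ≤ 1 := by
  rw [← sq_le_one_iff₀ (norm_nonneg _), EuclideanSpace.real_norm_sq_eq]
  fin_cases i <;> norm_num [pentagon, Fin.sum_univ_two]

theorem one_lt_dist_pentagon {i j : Fin 5} (hij : i ≠ j) : 1 < dist (pentagon i) (pentagon j) := by
  rw [EuclideanSpace.dist_eq, lt_sqrt zero_le_one]
  fin_cases i <;> fin_cases j <;> first
    | exact absurd rfl hij
    | norm_num [pentagon, Fin.sum_univ_two, Real.dist_eq, sq_abs]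

/-- In ℝ², the maximum number of points in a closed unit ball with
pairwise distances strictly greater than 1 is exactly 5. -/
theorem stmt_16 :
    (∃ p : Fin 5 → EuclideanSpace ℝ (Fin 2),
      (∀ i, ‖p i‖ ≤ 1) ∧ ∀ i j, i ≠ j → 1 < dist (p i) (p j)) ∧
    (∀ p : Fin 6 → EuclideanSpace ℝ (Fin 2),
      (∀ i, ‖p i‖ ≤ 1) → ∃ i j, i ≠ j ∧ dist (p i) (p j) ≤ 1) := by
  refine ⟨⟨pentagon, norm_pentagon_le_one, fun _ _ ↦ one_lt_dist_pentagon⟩, fun p hp ↦ ?_⟩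
  obtain ⟨i, j, hij, h⟩ := EuclideanSpace.exists_dist_le_max_norm p
  exact ⟨i, j, hij, h.trans (max_le (hp i) (hp j))⟩
end
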